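/- arXiv:1611.04831 — 9 statements merged into one kernel-verified Lean document; each statement's English description precedes it below -/
import Mathlib

section
/- Let d ≥ 1, let f : ℝ^d → ℝ be β-smooth with β > 0, and let η, θ > 0 satisfy η² + d·θ² ≤ η^{3/2}. Let x₀ ∈ ℝ^d with g₀ = ∇f(x₀) satisfying ‖g₀‖ ≥ β·√η (in particular g₀ ≠ 0), and let μ be the standard Gaussian measure on ℝ^d (the product over the d coordinates of the real Gaussian with mean 0 and variance 1). Then ∫ f(x₀ − η·g₀/‖g₀‖ + θ·n) dμ(n) − f(x₀) ≤ −β·η^{3/2}/2. -/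
open MeasureTheory ProbabilityTheory
open scoped RealInnerProductSpace

noncomputable section

/-- `ℝ^d` as Euclidean space. -/
abbrev Euc (d : ℕ) := EuclideanSpace ℝ (Fin d)

/-- `f` is differentiable and `β`-smooth: gradients are `β`-Lipschitz. -/
def IsSmoothFn {d : ℕ} (β : ℝ) (f : Euc d → ℝ) : Prop :=
  Differentiable ℝ f ∧ ∀ x y : Euc d, ‖gradient f x - gradient f y‖ ≤ β * ‖x - y‖

/-- The Hessian of `f` at `x`, as a continuous linear map. -/
def hessianCLM {d : ℕ} (f : Euc d → ℝ) (x : Euc d) : Euc d →L[ℝ] Euc d :=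
  fderiv ℝ (gradient f) x

/-- `f` is twice differentiable with `ρ`-Lipschitz Hessians (operator norm). -/
def HasLipschitzHessianFn {d : ℕ} (ρ : ℝ) (f : Euc d → ℝ) : Prop :=
  Differentiable ℝ f ∧ Differentiable ℝ (gradient f) ∧
    ∀ x y : Euc d, ‖hessianCLM f x - hessianCLM f y‖ ≤ ρ * ‖x - y‖

/-- `f` is `α`-strongly convex on the set `S`. -/
def StrongConvexOnSet {d : ℕ} (α : ℝ) (S : Set (Euc d)) (f : Euc d → ℝ) : Prop :=
  ∀ x ∈ S, ∀ y ∈ S, f y - f x ≥ ⟪gradient f x, y - x⟫ + α / 2 * ‖x - y‖ ^ 2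

/-- The `(α, γ, ν, r)`-strict-saddle property: at every point, either the gradient is
large, or the Hessian has an eigenvalue at most `-γ` (witnessed by a unit vector whose
quadratic form is at most `-γ`), or the point is `r`-close to a local minimum around which
`f` is `α`-strongly convex in a `2r`-ball. -/
def StrictSaddleFn {d : ℕ} (α γ ν r : ℝ) (f : Euc d → ℝ) : Prop :=
  ∀ x : Euc d,
    ν ≤ ‖gradient f x‖ ∨
    (∃ v : Euc d, ‖v‖ = 1 ∧ ⟪v, hessianCLM f x v⟫ ≤ -γ) ∨
    (∃ xs : Euc d, IsLocalMin f xs ∧ ‖x - xs‖ ≤ r ∧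
      StrongConvexOnSet α (Metric.closedBall xs (2 * r)) f)

/-- The standard Gaussian measure on `ℝ^d` (product of `d` standard real Gaussians). -/
def stdGaussian (d : ℕ) : Measure (Euc d) :=
  (Measure.pi fun _ : Fin d => gaussianReal 0 1).map
    (MeasurableEquiv.toLp 2 (Fin d → ℝ))

/-- The Saddle-NGD recursion: `X 0 = x₀` and
`X (t+1) = X t − η ∇f(X t)/‖∇f(X t)‖ + θ 1_{N₀ ∣ t} Noise t`
(with the convention that the normalized gradient is `0` when the gradient vanishes). -/
def IsSNGD {d : ℕ} {Ω : Type*} (f : Euc d → ℝ) (η θ : ℝ) (N₀ : ℕ) (x₀ : Euc d)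
    (Noise : ℕ → Ω → Euc d) (X : ℕ → Ω → Euc d) : Prop :=
  (∀ ω, X 0 ω = x₀) ∧
  ∀ t ω, X (t + 1) ω =
    X t ω - (η * ‖gradient f (X t ω)‖⁻¹) • gradient f (X t ω)
      + (if N₀ ∣ t then θ else 0) • Noise t ω

/-! The gradient of `f` is `β`-Lipschitz, so `f` lies below its tangent plane plus
`β/2 ‖w‖²`. Averaging this over the displacement `w = -η g₀/‖g₀‖ + θ n`, the noise contributes
nothing to the linear term (the Gaussian is centred) and `θ² d` to the quadratic one, so the
expected value is at most `f x₀ - η ‖g₀‖ + β/2 (η² + d θ²)`. The two hypotheses bound this by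
`f x₀ - β η^{3/2} + β η^{3/2}/2`. -/

section Descent

variable {F : Type*} [NormedAddCommGroup F] [InnerProductSpace ℝ F] [CompleteSpace F]
  {f : F → ℝ} {β : ℝ}

lemma abs_sub_sub_inner_gradient_le (hf : Differentiable ℝ f)
    (hlip : ∀ x y, ‖gradient f x - gradient f y‖ ≤ β * ‖x - y‖) (x v : F) :
    |f (x + v) - f x - ⟪gradient f x, v⟫| ≤ β / 2 * ‖v‖ ^ 2 := by
  have hderiv (t : ℝ) :
      HasDerivAt (fun t : ℝ => f (x + t • v)) ⟪gradient f (x + t • v), v⟫ t := by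
    have hline : HasDerivAt (fun t : ℝ => x + t • v) v t := by
      simpa using ((hasDerivAt_id t).smul_const v).const_add x
    exact (hf _).hasGradientAt.hasFDerivAt.comp_hasDerivAt t hline
  have hcont : Continuous fun t : ℝ => ⟪gradient f (x + t • v), v⟫ :=
    have hgrad : Continuous (gradient f) :=
      (LipschitzWith.of_dist_le' (f := gradient f) fun y z => by
        simpa only [dist_eq_norm] using hlip y z).continuous
    (hgrad.comp (by fun_prop)).inner continuous_const
  have hftc : f (x + v) - f x - ⟪gradient f x, v⟫
      = ∫ t in (0 : ℝ)..1, ⟪gradient f (x + t • v) - gradient f x, v⟫ := by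
    simp_rw [inner_sub_left]
    rw [intervalIntegral.integral_sub (hcont.intervalIntegrable 0 1) intervalIntegrable_const,
      intervalIntegral.integral_eq_sub_of_hasDerivAt (fun t _ => hderiv t)
        (hcont.intervalIntegrable 0 1)]
    simp
  have hbound : ∀ t ∈ Set.Ioc (0 : ℝ) 1,
      ‖⟪gradient f (x + t • v) - gradient f x, v⟫‖ ≤ β * ‖v‖ ^ 2 * t := by
    intro t ht
    calc ‖⟪gradient f (x + t • v) - gradient f x, v⟫‖
        ≤ ‖gradient f (x + t • v) - gradient f x‖ * ‖v‖ := norm_inner_le_norm _ _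
      _ ≤ β * ‖x + t • v - x‖ * ‖v‖ := by gcongr; exact hlip _ _
      _ = β * ‖v‖ ^ 2 * t := by
        rw [add_sub_cancel_left, norm_smul, Real.norm_of_nonneg ht.1.le]; ring
  rw [hftc, ← Real.norm_eq_abs]
  calc _ ≤ ∫ t in (0 : ℝ)..1, β * ‖v‖ ^ 2 * t :=
        intervalIntegral.norm_integral_le_of_norm_le zero_le_one
          (Filter.Eventually.of_forall hbound) ((continuous_const_mul _).intervalIntegrable 0 1)
    _ = β / 2 * ‖v‖ ^ 2 := by
        rw [intervalIntegral.integral_const_mul, integral_id]; ring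

variable [MeasurableSpace F] {μ : Measure F} [IsProbabilityMeasure μ]

lemma integral_norm_add_smul_sq (hμ : MemLp id 2 μ) (hmean : ∫ n, n ∂μ = 0) (v : F) (θ : ℝ) :
    ∫ n, ‖v + θ • n‖ ^ 2 ∂μ = ‖v‖ ^ 2 + θ ^ 2 * ∫ n, ‖n‖ ^ 2 ∂μ := by
  have hinner : Integrable (fun n => ⟪v, n⟫) μ := (hμ.integrable one_le_two).const_inner v
  have hsq : Integrable (fun n => ‖n‖ ^ 2) μ := hμ.integrable_norm_pow two_ne_zero
  have hexpand (n : F) : ‖v + θ • n‖ ^ 2 = ‖v‖ ^ 2 + 2 * θ * ⟪v, n⟫ + θ ^ 2 * ‖n‖ ^ 2 := by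
    rw [norm_add_sq_real, real_inner_smul_right, norm_smul, mul_pow, Real.norm_eq_abs, sq_abs]
    ring
  have hlin : Integrable (fun n => ‖v‖ ^ 2 + 2 * θ * ⟪v, n⟫) μ :=
    (integrable_const _).add (hinner.const_mul _)
  simp_rw [hexpand]
  rw [integral_add hlin (hsq.const_mul _),
    integral_add (integrable_const _) (hinner.const_mul _), integral_const_mul,
    integral_const_mul, integral_inner (f := fun n => n) (hμ.integrable one_le_two), hmean]
  simp

lemma integral_comp_sub_add_smul_le_of_lipschitz_gradient (hf : Differentiable ℝ f)
    (hlip : ∀ x y, ‖gradient f x - gradient f y‖ ≤ β * ‖x - y‖)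
    (hμ : MemLp id 2 μ) (hmean : ∫ n, n ∂μ = 0) (x v : F) (θ : ℝ) :
    ∫ n, f (x - v + θ • n) ∂μ
      ≤ f x - ⟪gradient f x, v⟫ + β / 2 * (‖v‖ ^ 2 + θ ^ 2 * ∫ n, ‖n‖ ^ 2 ∂μ) := by
  set g := gradient f x
  have hstep : MemLp (fun n => -v + θ • n) 2 μ := (memLp_const (-v)).add (hμ.const_smul θ)
  have hsmul_int : Integrable (fun n => θ • n) μ := (hμ.integrable one_le_two).smul θ
  have hstep_int : Integrable (fun n => -v + θ • n) μ := hstep.integrable one_le_two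
  have hsq : Integrable (fun n => ‖-v + θ • n‖ ^ 2) μ := hstep.integrable_norm_pow two_ne_zero
  have hlin : Integrable (fun n => f x + ⟪g, -v + θ • n⟫) μ :=
    (integrable_const _).add (hstep_int.const_inner g)
  have hrem : Integrable (fun n => f (x + (-v + θ • n)) - (f x + ⟪g, -v + θ • n⟫)) μ := by
    have := hf.continuous
    refine (hsq.const_mul (β / 2)).mono' (by fun_prop) (Filter.Eventually.of_forall fun n => ?_)
    rw [Real.norm_eq_abs, ← sub_sub]
    exact abs_sub_sub_inner_gradient_le hf hlip x _
  have hcomp : Integrable (fun n => f (x + (-v + θ • n))) μ := by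
    refine (hlin.add hrem).congr (ae_of_all _ fun n => ?_)
    simp
  simp_rw [sub_eq_add_neg x v, add_assoc]
  calc ∫ n, f (x + (-v + θ • n)) ∂μ
      ≤ ∫ n, f x + ⟪g, -v + θ • n⟫ + β / 2 * ‖-v + θ • n‖ ^ 2 ∂μ := by
        refine integral_mono hcomp (hlin.add (hsq.const_mul _)) fun n => ?_
        have := abs_sub_sub_inner_gradient_le hf hlip x (-v + θ • n)
        dsimp only
        linarith [le_abs_self (f (x + (-v + θ • n)) - f x - ⟪g, -v + θ • n⟫)]
    _ = f x - ⟪g, v⟫ + β / 2 * (‖v‖ ^ 2 + θ ^ 2 * ∫ n, ‖n‖ ^ 2 ∂μ) := by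
        rw [integral_add hlin (hsq.const_mul _), integral_add (integrable_const _)
          (hstep_int.const_inner g), integral_inner hstep_int, integral_const_mul,
          integral_norm_add_smul_sq hμ hmean, integral_add (integrable_const _) hsmul_int,
          integral_smul, hmean]
        simp [sub_eq_add_neg]

end Descent

section StdGaussian

variable {E : Type*} [NormedAddCommGroup E] [InnerProductSpace ℝ E] [FiniteDimensional ℝ E]
  [MeasurableSpace E] [BorelSpace E]

lemma integral_norm_sq_stdGaussian :
    ∫ x, ‖x‖ ^ 2 ∂(ProbabilityTheory.stdGaussian E) = Module.finrank ℝ E := by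
  set μ := ProbabilityTheory.stdGaussian E
  set b := stdOrthonormalBasis ℝ E
  have hcoord (i) : ∫ x, ⟪b i, x⟫ ^ 2 ∂μ = 1 := by
    have h := covarianceBilin_apply (IsGaussian.memLp_two_id (μ := μ)) (b i) (b i)
    simp only [μ, covarianceBilin_stdGaussian, id, integral_id_stdGaussian, sub_zero, ← sq] at h
    rw [← h, innerSL_apply_apply ℝ, b.inner_eq_one]
  simp_rw [← b.sum_sq_inner_right]
  rw [integral_finsetSum (f := fun i x => ⟪b i, x⟫ ^ 2) Finset.univ fun i _ =>
    ((IsGaussian.memLp_two_id (μ := μ)).const_inner (b i)).integrable_sq]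
  simp [hcoord]

end StdGaussian

lemma stdGaussian_eq_stdGaussian (d : ℕ) :
    stdGaussian d = ProbabilityTheory.stdGaussian (Euc d) :=
  map_pi_eq_stdGaussian

theorem stmt_2_general (d : ℕ) (β η θ : ℝ) (hβ : 0 < β)
    (f : Euc d → ℝ) (hf : IsSmoothFn β f)
    (hη : 0 < η)
    (hcond : η ^ 2 + (d : ℝ) * θ ^ 2 ≤ η * Real.sqrt η)
    (x₀ : Euc d) (hg : β * Real.sqrt η ≤ ‖gradient f x₀‖) :
    (∫ n, f (x₀ - (η * ‖gradient f x₀‖⁻¹) • gradient f x₀ + θ • n) ∂(stdGaussian d))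
        - f x₀ ≤ -(β * (η * Real.sqrt η)) / 2 := by
  obtain ⟨hdiff, hlip⟩ := hf
  set g := gradient f x₀
  have hg_pos : 0 < ‖g‖ := (mul_pos hβ (Real.sqrt_pos.mpr hη)).trans_le hg
  have hinner : ⟪g, (η * ‖g‖⁻¹) • g⟫ = η * ‖g‖ := by
    rw [real_inner_smul_right, real_inner_self_eq_norm_sq]
    field_simp
  have hnorm : ‖(η * ‖g‖⁻¹) • g‖ = η := by
    rw [norm_smul, Real.norm_of_nonneg (by positivity)]
    field_simp
  have hdescent := integral_comp_sub_add_smul_le_of_lipschitz_gradient hdiff hlip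
    (IsGaussian.memLp_two_id (μ := ProbabilityTheory.stdGaussian (Euc d)))
    integral_id_stdGaussian x₀ ((η * ‖g‖⁻¹) • g) θ
  rw [hinner, hnorm, integral_norm_sq_stdGaussian, finrank_euclideanSpace_fin] at hdescent
  have hgain : η * (β * Real.sqrt η) ≤ η * ‖g‖ := mul_le_mul_of_nonneg_left hg hη.le
  have hvar : β / 2 * (η ^ 2 + θ ^ 2 * d) ≤ β / 2 * (η * Real.sqrt η) := by
    rw [mul_comm (θ ^ 2)]
    gcongr
  rw [stdGaussian_eq_stdGaussian]
  linarith

/-- Lemma 1 (large gradients, noisy step): if `‖∇f(x₀)‖ ≥ β√η` and `η² + dθ² ≤ η^{3/2}`,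
then the expected value after one noisy NGD step decreases by at least `βη^{3/2}/2`. -/
theorem stmt_2 (d : ℕ) (hd : 1 ≤ d) (β η θ : ℝ) (hβ : 0 < β)
    (f : Euc d → ℝ) (hf : IsSmoothFn β f)
    (hη : 0 < η) (hθ : 0 < θ)
    (hcond : η ^ 2 + (d : ℝ) * θ ^ 2 ≤ η * Real.sqrt η)
    (x₀ : Euc d) (hg : β * Real.sqrt η ≤ ‖gradient f x₀‖) :
    (∫ n, f (x₀ - (η * ‖gradient f x₀‖⁻¹) • gradient f x₀ + θ • n) ∂(stdGaussian d))
        - f x₀ ≤ -(β * (η * Real.sqrt η)) / 2 :=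
  stmt_2_general d β η θ hβ f hf hη hcond x₀ hg
end
end

section
/- Let 0 < α ≤ β, r > 0, and 0 < η with (β/α)·√η ≤ r and √2·(β/α)·η ≤ r. Let f : ℝ^d → ℝ be β-smooth and α-strongly convex on the closed ball of radius 2r around a point x* with ∇f(x*) = 0. Let (x_t)_{t≥0} be the noiseless normalized gradient descent iterates started from x₀ with ‖x₀ − x*‖ ≤ (β/α)·√η. Then for every t ≥ 0: ‖x_t − x*‖² ≤ max{‖x₀ − x*‖², 2β²η²/α²}. -/
open MeasureTheory ProbabilityTheory
open scoped RealInnerProductSpace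

noncomputable section

/-!
Strong convexity around the minimiser gives `α‖x - x*‖² ≤ ⟪∇f x, x - x*⟫`, and smoothness gives
`‖∇f x‖ ≤ β‖x - x*‖`. Expanding the square of one normalised step of length `η`,
`‖x' - x*‖² = ‖x - x*‖² - 2η⟪∇f x, x - x*⟫ / ‖∇f x‖ + η²`: when `α‖x - x*‖ ≥ βη` the
inner-product term beats `η²` and the distance does not grow, and otherwise
`‖x' - x*‖² ≤ ‖x - x*‖² + η² ≤ 2β²η²/α²`. The bound `max{‖x₀ - x*‖², 2β²η²/α²}` is at most `r²`,
so by induction every iterate stays in the ball where strong convexity is available.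
-/

section NormalizedStep

variable {E : Type*} [NormedAddCommGroup E] [InnerProductSpace ℝ E]

theorem norm_sub_smul_inv_norm_sq (v : E) {g : E} (hg : g ≠ 0) (η : ℝ) :
    ‖v - (η * ‖g‖⁻¹) • g‖ ^ 2 = ‖v‖ ^ 2 - 2 * (η * ‖g‖⁻¹) * ⟪g, v⟫ + η ^ 2 := by
  have hG : ‖g‖ ≠ 0 := norm_ne_zero_iff.mpr hg
  rw [norm_sub_sq_real, real_inner_smul_right, real_inner_comm, norm_smul, Real.norm_eq_abs,
    mul_pow, sq_abs, mul_pow, inv_pow, inv_mul_cancel_right₀ (pow_ne_zero 2 hG)]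
  ring

theorem norm_sub_normalized_step_sq_le_max {α β η : ℝ} (hα : 0 < α) (hαβ : α ≤ β)
    (hη : 0 ≤ η) {v g : E} (halign : α * ‖v‖ ^ 2 ≤ ⟪g, v⟫) (hg : ‖g‖ ≤ β * ‖v‖) :
    ‖v - (η * ‖g‖⁻¹) • g‖ ^ 2 ≤ max (‖v‖ ^ 2) (2 * β ^ 2 * η ^ 2 / α ^ 2) := by
  rcases eq_or_ne g 0 with rfl | hg0
  · simp
  rw [norm_sub_smul_inv_norm_sq v hg0]
  have hG : 0 < ‖g‖ := norm_pos_iff.mpr hg0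
  have hs : 0 ≤ ‖v‖ := norm_nonneg v
  have hinner : 0 ≤ ⟪g, v⟫ := (by positivity : 0 ≤ α * ‖v‖ ^ 2).trans halign
  rcases le_or_gt (β * η) (α * ‖v‖) with hfar | hnear
  · have hdescent : η ^ 2 ≤ (η * ‖g‖⁻¹) * ⟪g, v⟫ := by
      have hηG : η * ‖g‖ ≤ ⟪g, v⟫ := by
        calc η * ‖g‖ ≤ η * (β * ‖v‖) := mul_le_mul_of_nonneg_left hg hη
          _ = β * η * ‖v‖ := by ring
          _ ≤ α * ‖v‖ * ‖v‖ := mul_le_mul_of_nonneg_right hfar hs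
          _ = α * ‖v‖ ^ 2 := by ring
          _ ≤ ⟪g, v⟫ := halign
      calc η ^ 2 = (η * ‖g‖⁻¹) * (η * ‖g‖) := by field_simp
        _ ≤ (η * ‖g‖⁻¹) * ⟪g, v⟫ := by gcongr
    exact le_max_of_le_left (by nlinarith [sq_nonneg η])
  · have hstep : 0 ≤ (η * ‖g‖⁻¹) * ⟪g, v⟫ := by positivity
    have hs_sq : ‖v‖ ^ 2 ≤ β ^ 2 * η ^ 2 / α ^ 2 := by
      rw [le_div_iff₀ (by positivity), ← mul_pow, ← mul_pow, mul_comm ‖v‖]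
      exact pow_le_pow_left₀ (by positivity) hnear.le 2
    have hη_sq : η ^ 2 ≤ β ^ 2 * η ^ 2 / α ^ 2 := by
      rw [le_div_iff₀ (by positivity)]
      have hαβ_sq : α ^ 2 ≤ β ^ 2 := pow_le_pow_left₀ hα.le hαβ 2
      nlinarith [sq_nonneg η]
    refine le_max_of_le_right ?_
    calc ‖v‖ ^ 2 - 2 * (η * ‖g‖⁻¹) * ⟪g, v⟫ + η ^ 2 ≤ ‖v‖ ^ 2 + η ^ 2 := by linarith
      _ ≤ β ^ 2 * η ^ 2 / α ^ 2 + β ^ 2 * η ^ 2 / α ^ 2 := add_le_add hs_sq hη_sq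
      _ = 2 * β ^ 2 * η ^ 2 / α ^ 2 := by ring

end NormalizedStep

theorem StrongConvexOnSet.mul_sq_le_inner_gradient {d : ℕ} {α : ℝ} {S : Set (Euc d)}
    {f : Euc d → ℝ} (hsc : StrongConvexOnSet α S f) {x xs : Euc d} (hx : x ∈ S) (hxs : xs ∈ S)
    (hgs : gradient f xs = 0) :
    α * ‖x - xs‖ ^ 2 ≤ ⟪gradient f x, x - xs⟫ := by
  have hfwd := hsc x hx xs hxs
  have hbwd := hsc xs hxs x hx
  rw [hgs, inner_zero_left, norm_sub_rev] at hbwd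
  rw [← neg_sub x xs, inner_neg_right] at hfwd
  linarith

theorem stmt_4_general (d : ℕ) (α β r η : ℝ)
    (hα : 0 < α) (hαβ : α ≤ β) (hη : 0 < η)
    (hηr : β / α * Real.sqrt η ≤ r) (hηr' : Real.sqrt 2 * (β / α) * η ≤ r)
    (f : Euc d → ℝ) (xs : Euc d)
    (hf : IsSmoothFn β f)
    (hsc : StrongConvexOnSet α (Metric.closedBall xs (2 * r)) f)
    (hgs : gradient f xs = 0)
    (x : ℕ → Euc d)
    (hx0 : ‖x 0 - xs‖ ≤ β / α * Real.sqrt η)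
    (hrec : ∀ t : ℕ, x (t + 1) =
      x t - (η * ‖gradient f (x t)‖⁻¹) • gradient f (x t)) :
    ∀ t : ℕ, ‖x t - xs‖ ^ 2 ≤ max (‖x 0 - xs‖ ^ 2) (2 * β ^ 2 * η ^ 2 / α ^ 2) := by
  have hβ : 0 < β := hα.trans_le hαβ
  set D := max (‖x 0 - xs‖ ^ 2) (2 * β ^ 2 * η ^ 2 / α ^ 2)
  have hD : D ≤ r ^ 2 := by
    refine max_le (pow_le_pow_left₀ (norm_nonneg _) (hx0.trans hηr) 2) ?_
    calc 2 * β ^ 2 * η ^ 2 / α ^ 2 = (Real.sqrt 2 * (β / α) * η) ^ 2 := by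
          rw [mul_pow, mul_pow, Real.sq_sqrt zero_le_two, div_pow]; ring
      _ ≤ r ^ 2 := pow_le_pow_left₀ (by positivity) hηr' 2
  have hr : 0 ≤ r := (norm_nonneg _).trans (hx0.trans hηr)
  have hball : ∀ y, ‖y - xs‖ ^ 2 ≤ D → y ∈ Metric.closedBall xs (2 * r) := fun y hy => by
    rw [Metric.mem_closedBall, dist_eq_norm]
    linarith [(pow_le_pow_iff_left₀ (norm_nonneg _) hr two_ne_zero).1 (hy.trans hD)]
  intro t
  induction t with
  | zero => exact le_max_left _ _
  | succ t ih =>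
    have halign := hsc.mul_sq_le_inner_gradient (hball _ ih)
      (Metric.mem_closedBall_self (by linarith)) hgs
    have hgrad : ‖gradient f (x t)‖ ≤ β * ‖x t - xs‖ := by
      simpa [hgs] using hf.2 (x t) xs
    rw [hrec t, sub_right_comm]
    exact (norm_sub_normalized_step_sq_le_max hα hαβ hη.le halign hgrad).trans
      (max_le ih (le_max_right _ _))

/-- Lemma 5 (local minimum, noiseless): NGD started `(β/α)√η`-close to a local minimum
`x*` of a locally strongly convex function stays within
`max{‖x₀ − x*‖², 2β²η²/α²}` squared distance of `x*`. -/
theorem stmt_4 (d : ℕ) (α β r η : ℝ)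
    (hα : 0 < α) (hαβ : α ≤ β) (hr : 0 < r) (hη : 0 < η)
    (hηr : β / α * Real.sqrt η ≤ r) (hηr' : Real.sqrt 2 * (β / α) * η ≤ r)
    (f : Euc d → ℝ) (xs : Euc d)
    (hf : IsSmoothFn β f)
    (hsc : StrongConvexOnSet α (Metric.closedBall xs (2 * r)) f)
    (hgs : gradient f xs = 0)
    (x : ℕ → Euc d)
    (hx0 : ‖x 0 - xs‖ ≤ β / α * Real.sqrt η)
    (hrec : ∀ t : ℕ, x (t + 1) =
      x t - (η * ‖gradient f (x t)‖⁻¹) • gradient f (x t)) :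
    ∀ t : ℕ, ‖x t - xs‖ ^ 2 ≤ max (‖x 0 - xs‖ ^ 2) (2 * β ^ 2 * η ^ 2 / α ^ 2) :=
  stmt_4_general d α β r η hα hαβ hη hηr hηr' f xs hf hsc hgs x hx0 hrec
end
end

section
/- Let 0 < α ≤ β, r > 0, and 0 < η ≤ 1. Let f : ℝ^d → ℝ be β-smooth and α-strongly convex on the closed ball of radius 2r around a point x* with ∇f(x*) = 0. Let x ∈ ℝ^d satisfy (β/α)·√η ≤ ‖x − x*‖ ≤ 2r. Then ∇f(x) ≠ 0, and the normalized gradient descent step x' = x − η·∇f(x)/‖∇f(x)‖ satisfies ‖x' − x*‖² ≤ ‖x − x*‖² − η^{3/2}. -/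
open MeasureTheory ProbabilityTheory
open scoped RealInnerProductSpace

noncomputable section

/-!
Strong convexity on the ball, together with `∇f(x*) = 0`, gives `α‖x − x*‖² ≤ ⟪∇f(x), x − x*⟫`,
while smoothness gives `‖∇f(x)‖ ≤ β‖x − x*‖`. Hence the angle between `∇f(x)` and `x − x*` is
controlled: `⟪∇f(x), x − x*⟫ ≥ (α/β)‖x − x*‖ ‖∇f(x)‖ ≥ √η ‖∇f(x)‖`. A step of length `η` along
such a direction lowers the squared distance by at least `2η√η − η² ≥ η√η`.
-/

theorem StrongConvexOnSet.mul_sq_le_inner_gradient_sub {d : ℕ} {α : ℝ} {S : Set (Euc d)}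
    {f : Euc d → ℝ} (hf : StrongConvexOnSet α S f) {x y : Euc d} (hx : x ∈ S) (hy : y ∈ S) :
    α * ‖x - y‖ ^ 2 ≤ ⟪gradient f x - gradient f y, x - y⟫ := by
  have hxy := hf x hx y hy
  have hyx := hf y hy x hx
  rw [← neg_sub x y, inner_neg_right] at hxy
  rw [norm_sub_rev y x] at hyx
  rw [inner_sub_left]
  linarith

theorem norm_sub_normalized_smul_sq_le {F : Type*} [NormedAddCommGroup F]
    [InnerProductSpace ℝ F] {g v : F} {c η : ℝ} (hg : g ≠ 0) (hη : 0 ≤ η)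
    (hc : c * ‖g‖ ≤ ⟪g, v⟫) :
    ‖v - (η * ‖g‖⁻¹) • g‖ ^ 2 ≤ ‖v‖ ^ 2 - 2 * η * c + η ^ 2 := by
  have hg' : 0 < ‖g‖ := norm_pos_iff.2 hg
  have hstep : ‖(η * ‖g‖⁻¹) • g‖ = η := by
    rw [norm_smul, Real.norm_of_nonneg (by positivity), inv_mul_cancel_right₀ hg'.ne']
  have hc' : c ≤ ‖g‖⁻¹ * ⟪g, v⟫ := by rwa [inv_mul_eq_div, le_div_iff₀ hg']
  rw [norm_sub_sq_real, hstep, real_inner_smul_right, real_inner_comm, mul_assoc]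
  nlinarith

theorem stmt_6_general (d : ℕ) (α β r η : ℝ)
    (hα : 0 < α) (hαβ : α ≤ β) (hη0 : 0 < η) (hη1 : η ≤ 1)
    (f : Euc d → ℝ) (xs : Euc d)
    (hf : IsSmoothFn β f)
    (hsc : StrongConvexOnSet α (Metric.closedBall xs (2 * r)) f)
    (hgs : gradient f xs = 0)
    (x : Euc d)
    (hlow : β / α * Real.sqrt η ≤ ‖x - xs‖) (hhigh : ‖x - xs‖ ≤ 2 * r) :
    gradient f x ≠ 0 ∧
      ‖x - (η * ‖gradient f x‖⁻¹) • gradient f x - xs‖ ^ 2 ≤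
        ‖x - xs‖ ^ 2 - η * Real.sqrt η := by
  set g := gradient f x
  have hx : x ∈ Metric.closedBall xs (2 * r) := mem_closedBall_iff_norm.2 hhigh
  have hxs : xs ∈ Metric.closedBall xs (2 * r) :=
    Metric.mem_closedBall_self ((norm_nonneg _).trans hhigh)
  have hmono : α * ‖x - xs‖ ^ 2 ≤ ⟪g, x - xs⟫ := by
    simpa only [hgs, sub_zero] using hsc.mul_sq_le_inner_gradient_sub hx hxs
  have hsmooth : ‖g‖ ≤ β * ‖x - xs‖ := by simpa only [hgs, sub_zero] using hf.2 x xs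
  have hdist : 0 < ‖x - xs‖ := lt_of_lt_of_le (by have := hα.trans_le hαβ; positivity) hlow
  have hg : g ≠ 0 := by
    rintro hg
    rw [hg, inner_zero_left] at hmono
    exact hmono.not_gt (by positivity)
  have hβ : β * √η ≤ α * ‖x - xs‖ := by
    rwa [div_mul_eq_mul_div, div_le_iff₀' hα] at hlow
  have hangle : √η * ‖g‖ ≤ ⟪g, x - xs⟫ :=
    calc √η * ‖g‖ ≤ √η * (β * ‖x - xs‖) := by gcongr
      _ = β * √η * ‖x - xs‖ := by ring
      _ ≤ α * ‖x - xs‖ * ‖x - xs‖ := by gcongr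
      _ = α * ‖x - xs‖ ^ 2 := by ring
      _ ≤ ⟪g, x - xs⟫ := hmono
  have hη_le_sqrt : η ≤ √η := (Real.le_sqrt hη0.le hη0.le).2 (by nlinarith)
  refine ⟨hg, ?_⟩
  calc ‖x - (η * ‖g‖⁻¹) • g - xs‖ ^ 2 = ‖(x - xs) - (η * ‖g‖⁻¹) • g‖ ^ 2 := by
        rw [sub_right_comm]
    _ ≤ ‖x - xs‖ ^ 2 - 2 * η * √η + η ^ 2 := norm_sub_normalized_smul_sq_le hg hη0.le hangle
    _ ≤ ‖x - xs‖ ^ 2 - η * √η := by nlinarith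

/-- One NGD step towards a local minimum: if `(β/α)√η ≤ ‖x − x*‖ ≤ 2r`, the gradient is
nonzero and the normalized step decreases the squared distance by at least `η^{3/2}`. -/
theorem stmt_6 (d : ℕ) (α β r η : ℝ)
    (hα : 0 < α) (hαβ : α ≤ β) (hr : 0 < r) (hη0 : 0 < η) (hη1 : η ≤ 1)
    (f : Euc d → ℝ) (xs : Euc d)
    (hf : IsSmoothFn β f)
    (hsc : StrongConvexOnSet α (Metric.closedBall xs (2 * r)) f)
    (hgs : gradient f xs = 0)
    (x : Euc d)
    (hlow : β / α * Real.sqrt η ≤ ‖x - xs‖) (hhigh : ‖x - xs‖ ≤ 2 * r) :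
    gradient f x ≠ 0 ∧
      ‖x - (η * ‖gradient f x‖⁻¹) • gradient f x - xs‖ ^ 2 ≤
        ‖x - xs‖ ^ 2 - η * Real.sqrt η :=
  stmt_6_general d α β r η hα hαβ hη0 hη1 f xs hf hsc hgs x hlow hhigh
end
end

section
/- Consider the normalized-update dynamics with approximation error (ρ/2)·η²·T², and let e be a unit eigenvector of H with eigenvalue λ ≥ 0; write α_t = ⟨e, x_t⟩. Then for every t with 0 ≤ t ≤ T: (i) if λ·|α₀| ≥ (ρ/2)·η²·T², then |α_t| ≤ max{η, |α₀|} + η; (ii) if λ > 0, then in any case |α_t| ≤ max{η, |α₀|} + η·min{1 + ρηT²/(2λ), T}. -/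
open MeasureTheory ProbabilityTheory
open scoped RealInnerProductSpace

noncomputable section

/-! The component `α_t` moves by at most `η` per step. Since `⟪e, g_t⟫` is within `ε` of
`λ α_t`, once `λ |α_t| ≥ ε` the step has the sign of `α_t`, so it cannot push `|α_t|` above
`max |α_t| η`. Hence `|α_t|` exceeds any threshold `M ≥ η, |α₀|` above which this restoring
property holds by at most one step `η`; for (i) take `M = max η |α₀|`, for (ii)
`M = max η |α₀| + ε / λ`, or else use the crude drift bound `|α_t| ≤ |α₀| + η t`. -/

theorem abs_sub_le_max_of_mul_nonneg {a δ η : ℝ} (hsign : 0 ≤ a * δ) (hδ : |δ| ≤ η) :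
    |a - δ| ≤ max |a| η := by
  obtain ⟨hδl, hδu⟩ := abs_le.mp hδ
  have := le_max_left |a| η
  have := le_max_right |a| η
  rcases mul_nonneg_iff.mp hsign with ⟨ha, hδ0⟩ | ⟨ha, hδ0⟩ <;>
    exact abs_le.mpr ⟨by linarith [neg_abs_le a], by linarith [le_abs_self a]⟩

theorem mul_nonneg_of_abs_sub_mul_le {a b lam : ℝ} (h : |b - lam * a| ≤ lam * |a|) :
    0 ≤ a * b := by
  obtain ⟨hl, hu⟩ := abs_le.mp h
  rcases le_total 0 a with ha | ha
  · rw [abs_of_nonneg ha] at hl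
    exact mul_nonneg ha (by linarith)
  · rw [abs_of_nonpos ha] at hu
    exact mul_nonneg_of_nonpos_of_nonpos ha (by linarith)

theorem abs_le_add_mul_of_abs_succ_sub_le {a : ℕ → ℝ} {η : ℝ} {T : ℕ}
    (hstep : ∀ s < T, |a (s + 1) - a s| ≤ η) :
    ∀ s ≤ T, |a s| ≤ |a 0| + η * s := by
  intro s
  induction s with
  | zero => simp
  | succ n ih =>
    intro hn
    have := abs_sub_abs_le_abs_sub (a (n + 1)) (a n)
    have := hstep n hn
    have := ih (Nat.le_of_succ_le hn)
    push_cast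
    linarith

theorem abs_le_add_of_restoring {a : ℕ → ℝ} {η M : ℝ} {T : ℕ} (hη : 0 ≤ η)
    (hM₀ : |a 0| ≤ M) (hηM : η ≤ M)
    (hstep : ∀ s < T, |a (s + 1) - a s| ≤ η)
    (hrestore : ∀ s < T, M < |a s| → |a (s + 1)| ≤ max |a s| η) :
    ∀ s ≤ T, |a s| ≤ M + η := by
  intro s
  induction s with
  | zero => intro; linarith
  | succ n ih =>
    intro hn
    have ihn := ih (Nat.le_of_succ_le hn)
    rcases le_or_gt |a n| M with hle | hgt
    · have := abs_sub_abs_le_abs_sub (a (n + 1)) (a n)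
      have := hstep n hn
      linarith
    · exact (hrestore n hn hgt).trans (max_le ihn (by linarith))

section NormalizedUpdate

variable {d : ℕ} {H : Euc d →L[ℝ] Euc d} {η ε lam : ℝ} {T : ℕ} {x g : ℕ → Euc d}
  {e : Euc d}

theorem inner_apply_eq_mul_inner_of_eigenvector (hsym : ∀ v w : Euc d, ⟪H v, w⟫ = ⟪v, H w⟫)
    (heig : H e = lam • e) (v : Euc d) : ⟪e, H v⟫ = lam * ⟪e, v⟫ := by
  rw [← hsym, heig, real_inner_smul_left]

theorem abs_inner_smul_inv_norm_le (he : ‖e‖ = 1) (hη : 0 ≤ η) (v : Euc d) :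
    |⟪e, (η * ‖v‖⁻¹) • v⟫| ≤ η :=
  calc |⟪e, (η * ‖v‖⁻¹) • v⟫| ≤ ‖(η * ‖v‖⁻¹) • v‖ := by
        simpa [he] using abs_real_inner_le_norm e ((η * ‖v‖⁻¹) • v)
    _ = η * (‖v‖⁻¹ * ‖v‖) := by
        rw [norm_smul, Real.norm_of_nonneg (by positivity), mul_assoc]
    _ ≤ η := mul_le_of_le_one_right hη (inv_mul_le_one_of_le₀ le_rfl (norm_nonneg v))

theorem inner_succ_eq (hrec : ∀ t < T, x (t + 1) = x t - (η * ‖g t‖⁻¹) • g t)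
    {s : ℕ} (hs : s < T) : ⟪e, x (s + 1)⟫ = ⟪e, x s⟫ - ⟪e, (η * ‖g s‖⁻¹) • g s⟫ := by
  rw [hrec s hs, inner_sub_right]

theorem abs_inner_succ_sub_le (he : ‖e‖ = 1) (hη : 0 ≤ η)
    (hrec : ∀ t < T, x (t + 1) = x t - (η * ‖g t‖⁻¹) • g t) :
    ∀ s < T, |⟪e, x (s + 1)⟫ - ⟪e, x s⟫| ≤ η := by
  intro s hs
  rw [inner_succ_eq hrec hs, sub_sub_cancel_left, abs_neg]
  exact abs_inner_smul_inv_norm_le he hη (g s)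

theorem abs_inner_succ_le_max (hsym : ∀ v w : Euc d, ⟪H v, w⟫ = ⟪v, H w⟫)
    (heig : H e = lam • e) (he : ‖e‖ = 1) (hη : 0 ≤ η)
    (hrec : ∀ t < T, x (t + 1) = x t - (η * ‖g t‖⁻¹) • g t)
    (happ : ∀ t ≤ T, ‖g t - H (x t)‖ ≤ ε) :
    ∀ s < T, ε ≤ lam * |⟪e, x s⟫| → |⟪e, x (s + 1)⟫| ≤ max |⟪e, x s⟫| η := by
  intro s hs hlarge
  have happrox : |⟪e, g s⟫ - lam * ⟪e, x s⟫| ≤ lam * |⟪e, x s⟫| :=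
    calc |⟪e, g s⟫ - lam * ⟪e, x s⟫| = |⟪e, g s - H (x s)⟫| := by
          rw [inner_sub_right, inner_apply_eq_mul_inner_of_eigenvector hsym heig]
      _ ≤ ‖g s - H (x s)‖ := by simpa [he] using abs_real_inner_le_norm e (g s - H (x s))
      _ ≤ lam * |⟪e, x s⟫| := (happ s hs.le).trans hlarge
  have hsign : 0 ≤ ⟪e, x s⟫ * ⟪e, (η * ‖g s‖⁻¹) • g s⟫ := by
    rw [real_inner_smul_right, mul_left_comm]
    exact mul_nonneg (by positivity) (mul_nonneg_of_abs_sub_mul_le happrox)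
  rw [inner_succ_eq hrec hs]
  exact abs_sub_le_max_of_mul_nonneg hsign (abs_inner_smul_inv_norm_le he hη (g s))

end NormalizedUpdate

theorem stmt_12_general (d : ℕ) (H : Euc d →L[ℝ] Euc d)
    (hsym : ∀ v w : Euc d, ⟪H v, w⟫ = ⟪v, H w⟫)
    (η ρ : ℝ) (hη : 0 < η) (T : ℕ)
    (x g : ℕ → Euc d)
    (hrec : ∀ t < T, x (t + 1) = x t - (η * ‖g t‖⁻¹) • g t)
    (happ : ∀ t ≤ T, ‖g t - H (x t)‖ ≤ ρ / 2 * η ^ 2 * (T : ℝ) ^ 2)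
    (e : Euc d) (he : ‖e‖ = 1) (lam : ℝ) (heig : H e = lam • e) (hlam : 0 ≤ lam) :
    ∀ t ≤ T,
      (ρ / 2 * η ^ 2 * (T : ℝ) ^ 2 ≤ lam * |⟪e, x 0⟫| →
        |⟪e, x t⟫| ≤ max η |⟪e, x 0⟫| + η) ∧
      (0 < lam →
        |⟪e, x t⟫| ≤ max η |⟪e, x 0⟫|
          + η * min (1 + ρ * η * (T : ℝ) ^ 2 / (2 * lam)) (T : ℝ)) := by
  set ε := ρ / 2 * η ^ 2 * (T : ℝ) ^ 2 with hε
  have hε₀ : 0 ≤ ε := (norm_nonneg _).trans (happ 0 T.zero_le)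
  have hstep := abs_inner_succ_sub_le he hη.le hrec
  have hrestore := abs_inner_succ_le_max hsym heig he hη.le hrec happ
  intro t ht
  refine ⟨fun hα₀ => ?_, fun hlam_pos => ?_⟩
  · refine abs_le_add_of_restoring (a := fun s => ⟪e, x s⟫) hη.le (le_max_right _ _)
      (le_max_left _ _) hstep (fun s hs hs_large => hrestore s hs (hα₀.trans ?_)) t ht
    exact mul_le_mul_of_nonneg_left ((le_max_right _ _).trans hs_large.le) hlam
  rw [mul_min_of_nonneg _ _ hη.le, ← min_add_add_left]
  refine le_min ?_ ?_
  · have hεlam : 0 ≤ ε / lam := div_nonneg hε₀ hlam_pos.le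
    have hbound := abs_le_add_of_restoring (a := fun s => ⟪e, x s⟫)
      (M := max η |⟪e, x 0⟫| + ε / lam) hη.le
      (by linarith [le_max_right η |⟪e, x 0⟫|]) (by linarith [le_max_left η |⟪e, x 0⟫|]) hstep
      (fun s hs hs_large => hrestore s hs (by
        rw [← div_le_iff₀' hlam_pos]
        linarith [le_max_left η |⟪e, x 0⟫|])) t ht
    have hsplit : η * (1 + ρ * η * (T : ℝ) ^ 2 / (2 * lam)) = ε / lam + η := by
      rw [hε]; field_simp; ring
    linarith
  · have hdrift := abs_le_add_mul_of_abs_succ_sub_le (a := fun s => ⟪e, x s⟫) hstep t ht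
    have hdrift_T : η * t ≤ η * T := mul_le_mul_of_nonneg_left (by exact_mod_cast ht) hη.le
    linarith [le_max_right η |⟪e, x 0⟫|]

/-- Lemma 7 (positive eigendirections): in the normalized-update dynamics with
approximation error `(ρ/2)η²T²`, the component `α_t = ⟨e, x_t⟩` along a unit eigenvector
`e` of `H` with eigenvalue `λ ≥ 0` stays bounded as stated. -/
theorem stmt_12 (d : ℕ) (H : Euc d →L[ℝ] Euc d)
    (hsym : ∀ v w : Euc d, ⟪H v, w⟫ = ⟪v, H w⟫)
    (η ρ : ℝ) (hη : 0 < η) (hρ : 0 < ρ) (T : ℕ)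
    (x g : ℕ → Euc d)
    (hgne : ∀ t ≤ T, g t ≠ 0)
    (hrec : ∀ t < T, x (t + 1) = x t - (η * ‖g t‖⁻¹) • g t)
    (happ : ∀ t ≤ T, ‖g t - H (x t)‖ ≤ ρ / 2 * η ^ 2 * (T : ℝ) ^ 2)
    (e : Euc d) (he : ‖e‖ = 1) (lam : ℝ) (heig : H e = lam • e) (hlam : 0 ≤ lam) :
    ∀ t ≤ T,
      (ρ / 2 * η ^ 2 * (T : ℝ) ^ 2 ≤ lam * |⟪e, x 0⟫| →
        |⟪e, x t⟫| ≤ max η |⟪e, x 0⟫| + η) ∧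
      (0 < lam →
        |⟪e, x t⟫| ≤ max η |⟪e, x 0⟫|
          + η * min (1 + ρ * η * (T : ℝ) ^ 2 / (2 * lam)) (T : ℝ)) :=
  stmt_12_general d H hsym η ρ hη T x g hrec happ e he lam heig hlam
end
end

section
/- Consider the normalized-update dynamics with approximation error (ρ/2)·η²·T², and let e be a unit eigenvector of H with eigenvalue λ ≤ 0; write α_t = ⟨e, x_t⟩. Then for every t with 0 ≤ t ≤ T: |α_t| ≥ |α₀| − η·t, and if moreover |λ|·|α₀| > (ρ/2)·η²·T², then |α_t| ≥ |α₀|. -/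
open MeasureTheory ProbabilityTheory
open scoped RealInnerProductSpace

noncomputable section

/-! Each step moves `x` by a vector of length at most `η`, so `α_t = ⟪e, x_t⟫` changes by at
most `η` per step. Along `e`, the step direction `g_t` equals `λ α_t` up to the error
`(ρ/2)η²T²`; as long as `|λ α_t|` exceeds that error, `⟪e, g_t⟫` has the sign of `λ α_t`, opposite
to that of `α_t` since `λ ≤ 0`, so the step pushes `α_t` away from `0`. Hence `|α_t| ≥ |α_0|`
propagates by induction. -/

theorem Nat.forall_le_of_succ {T : ℕ} {P : ℕ → Prop} (h0 : P 0)
    (hsucc : ∀ n < T, P n → P (n + 1)) : ∀ t ≤ T, P t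
  | 0, _ => h0
  | n + 1, h => hsucc n h (Nat.forall_le_of_succ h0 hsucc n (Nat.le_of_succ_le h))

theorem abs_le_abs_sub_of_mul_nonpos {a b c : ℝ} (hab : a * b ≤ 0) (hc : 0 ≤ c) :
    |a| ≤ |a - c * b| :=
  sq_le_sq.mp (by nlinarith [mul_nonneg hc (sq_nonneg b), mul_nonneg hc (neg_nonneg.mpr hab)])

theorem mul_nonpos_of_abs_sub_mul_le {a b lam ε : ℝ} (hlam : lam ≤ 0)
    (hb : |b - lam * a| ≤ ε) (hε : ε < |lam| * |a|) : a * b ≤ 0 := by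
  have hcross : a * (b - lam * a) ≤ |a| * ε := by
    calc a * (b - lam * a) ≤ |a * (b - lam * a)| := le_abs_self _
      _ = |a| * |b - lam * a| := abs_mul _ _
      _ ≤ |a| * ε := mul_le_mul_of_nonneg_left hb (abs_nonneg a)
  have hsq : lam * a ^ 2 = -(|lam| * |a|) * |a| := by
    rw [abs_of_nonpos hlam, ← sq_abs a]; ring
  nlinarith [abs_nonneg a]

section InnerProductSpace

variable {E : Type*} [NormedAddCommGroup E] [InnerProductSpace ℝ E]

theorem norm_smul_inv_norm_le {η : ℝ} (hη : 0 ≤ η) (g : E) : ‖(η * ‖g‖⁻¹) • g‖ ≤ η := by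
  rw [norm_smul, Real.norm_of_nonneg (by positivity), mul_assoc]
  exact mul_le_of_le_one_right hη (inv_mul_le_one_of_le₀ le_rfl (norm_nonneg g))

theorem abs_inner_sub_norm_le {e : E} (he : ‖e‖ ≤ 1) (x s : E) :
    |⟪e, x⟫| - ‖s‖ ≤ |⟪e, x - s⟫| := by
  have hs : |⟪e, s⟫| ≤ ‖s‖ :=
    (abs_real_inner_le_norm e s).trans (mul_le_of_le_one_left (norm_nonneg s) he)
  rw [inner_sub_right]
  linarith [abs_sub_abs_le_abs_sub ⟪e, x⟫ ⟪e, s⟫]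

theorem abs_inner_sub_eigen_mul_le {H : E →ₗ[ℝ] E} (hH : H.IsSymmetric) {e : E} {lam : ℝ}
    (heig : H e = lam • e) (he : ‖e‖ ≤ 1) {g x : E} {ε : ℝ} (hgx : ‖g - H x‖ ≤ ε) :
    |⟪e, g⟫ - lam * ⟪e, x⟫| ≤ ε := by
  have hcomp : ⟪e, g⟫ - lam * ⟪e, x⟫ = ⟪e, g - H x⟫ := by
    rw [inner_sub_right, ← hH, heig, real_inner_smul_left]
  rw [hcomp]
  exact (abs_real_inner_le_norm e _).trans
    ((mul_le_of_le_one_left (norm_nonneg _) he).trans hgx)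

end InnerProductSpace

theorem stmt_13_general (d : ℕ) (H : Euc d →L[ℝ] Euc d)
    (hsym : ∀ v w : Euc d, ⟪H v, w⟫ = ⟪v, H w⟫)
    (η ρ : ℝ) (hη : 0 < η) (T : ℕ)
    (x g : ℕ → Euc d)
    (hrec : ∀ t < T, x (t + 1) = x t - (η * ‖g t‖⁻¹) • g t)
    (happ : ∀ t ≤ T, ‖g t - H (x t)‖ ≤ ρ / 2 * η ^ 2 * (T : ℝ) ^ 2)
    (e : Euc d) (he : ‖e‖ = 1) (lam : ℝ) (heig : H e = lam • e) (hlam : lam ≤ 0) :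
    ∀ t ≤ T,
      |⟪e, x 0⟫| - η * t ≤ |⟪e, x t⟫| ∧
      (ρ / 2 * η ^ 2 * (T : ℝ) ^ 2 < |lam| * |⟪e, x 0⟫| →
        |⟪e, x 0⟫| ≤ |⟪e, x t⟫|) := by
  have hdrift : ∀ n < T, |⟪e, x n⟫| - η ≤ |⟪e, x (n + 1)⟫| := fun n hn => by
    rw [hrec n hn]
    linarith [abs_inner_sub_norm_le he.le (x n) ((η * ‖g n‖⁻¹) • g n),
      norm_smul_inv_norm_le hη.le (g n)]
  have hescape : ρ / 2 * η ^ 2 * (T : ℝ) ^ 2 < |lam| * |⟪e, x 0⟫| →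
      ∀ n < T, |⟪e, x 0⟫| ≤ |⟪e, x n⟫| → |⟪e, x 0⟫| ≤ |⟪e, x (n + 1)⟫| := by
    intro hcond n hn hn0
    have hsign : ⟪e, x n⟫ * ⟪e, g n⟫ ≤ 0 :=
      mul_nonpos_of_abs_sub_mul_le hlam
        (abs_inner_sub_eigen_mul_le (H := H.toLinearMap) hsym heig he.le (happ n hn.le))
        (hcond.trans_le (mul_le_mul_of_nonneg_left hn0 (abs_nonneg lam)))
    rw [hrec n hn, inner_sub_right, real_inner_smul_right]
    exact hn0.trans (abs_le_abs_sub_of_mul_nonpos hsign (by positivity))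
  intro t ht
  refine ⟨Nat.forall_le_of_succ (P := fun n => |⟪e, x 0⟫| - η * n ≤ |⟪e, x n⟫|)
      (by simp) (fun n hn ih => ?_) t ht,
    fun hcond => Nat.forall_le_of_succ (P := fun n => |⟪e, x 0⟫| ≤ |⟪e, x n⟫|)
      le_rfl (hescape hcond) t ht⟩
  push_cast
  linarith [hdrift n hn]

/-- Lemma 8 (negative eigendirections): in the normalized-update dynamics with
approximation error `(ρ/2)η²T²`, the component `α_t = ⟨e, x_t⟩` along a unit eigenvector
`e` of `H` with eigenvalue `λ ≤ 0` cannot shrink too much. -/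
theorem stmt_13 (d : ℕ) (H : Euc d →L[ℝ] Euc d)
    (hsym : ∀ v w : Euc d, ⟪H v, w⟫ = ⟪v, H w⟫)
    (η ρ : ℝ) (hη : 0 < η) (hρ : 0 < ρ) (T : ℕ)
    (x g : ℕ → Euc d)
    (hgne : ∀ t ≤ T, g t ≠ 0)
    (hrec : ∀ t < T, x (t + 1) = x t - (η * ‖g t‖⁻¹) • g t)
    (happ : ∀ t ≤ T, ‖g t - H (x t)‖ ≤ ρ / 2 * η ^ 2 * (T : ℝ) ^ 2)
    (e : Euc d) (he : ‖e‖ = 1) (lam : ℝ) (heig : H e = lam • e) (hlam : lam ≤ 0) :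
    ∀ t ≤ T,
      |⟪e, x 0⟫| - η * t ≤ |⟪e, x t⟫| ∧
      (ρ / 2 * η ^ 2 * (T : ℝ) ^ 2 < |lam| * |⟪e, x 0⟫| →
        |⟪e, x 0⟫| ≤ |⟪e, x t⟫|) :=
  stmt_13_general d H hsym η ρ hη T x g hrec happ e he lam heig hlam
end
end

section
/- For every β > 0 and ρ > 0 there exists a constant C > 0, depending only on β and ρ, such that the following holds. Consider the normalized-update dynamics with approximation error (ρ/2)·η²·T², where 0 < η ≤ 1, 2 ≤ T ≤ η^{-1/2}, and all eigenvalues of H lie in [−β, β]. Let e be a unit eigenvector of H with eigenvalue λ > 0, write α_t = ⟨e, x_t⟩, and assume the initial-gradient bound λ·|α₀| ≤ β·√η. Then for every t with 0 ≤ t ≤ T: λ·((α_t)² − (α₀)²) ≤ C·η^{3/2}. -/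
open MeasureTheory ProbabilityTheory
open scoped RealInnerProductSpace

noncomputable section

/-!
Project the dynamics on `e`: with `α_t = ⟪e, x_t⟫` and `ε = (ρ/2)η²T²` one gets
`α_{t+1} = α_t - η u_t` with `|u_t| ≤ 1`, and since `⟪e, g_t⟫ = λ α_t + O(ε)`, `u_t` has the
sign of `α_t` as soon as `λ|α_t| ≥ ε`. Outside the band `|α| < ε/λ` a step therefore raises
`α²` by at most `η²`, and from inside the band a step lands in `|α| ≤ ε/λ + η`; hence
`α_t² ≤ max(α_0², (ε/λ + η)²) + tη²`. As `tη ≤ √η` and `ε ≤ ρη/2`, this gives the `η^{3/2}`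
bound, except when `α_0` starts in the band with `λ ≤ √η`, where `ε²/λ` is too large and the
crude bound `|α_t| ≤ |α_0| + tη` is used instead.
-/

section ProjectedStep

variable {E : Type*} [NormedAddCommGroup E] [InnerProductSpace ℝ E]

theorem inner_sub_normalized_smul (e x g : E) (η : ℝ) :
    ⟪e, x - (η * ‖g‖⁻¹) • g⟫ = ⟪e, x⟫ - η * (‖g‖⁻¹ * ⟪e, g⟫) := by
  rw [inner_sub_right, real_inner_smul_right]
  ring

theorem abs_inv_norm_mul_inner_le_one {e : E} (he : ‖e‖ = 1) (g : E) :
    |‖g‖⁻¹ * ⟪e, g⟫| ≤ 1 := by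
  rw [abs_mul, abs_inv, abs_norm]
  refine inv_mul_le_one_of_le₀ ?_ (norm_nonneg g)
  simpa [he] using abs_real_inner_le_norm e g

theorem inner_apply_eq_of_apply_eq_smul {H : E →L[ℝ] E}
    (hH : ∀ v w : E, ⟪H v, w⟫ = ⟪v, H w⟫) {e : E} {lam : ℝ} (hHe : H e = lam • e) (x : E) :
    ⟪e, H x⟫ = lam * ⟪e, x⟫ := by
  rw [← hH, hHe, real_inner_smul_left]

theorem abs_le_opNorm_of_apply_eq_smul {H : E →L[ℝ] E} {e : E} {lam : ℝ} (he : ‖e‖ = 1)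
    (hHe : H e = lam • e) : |lam| ≤ ‖H‖ := by
  simpa [hHe, norm_smul, he] using H.le_opNorm e

/-- Far from the band, the error cannot flip the sign of the `e`-component of the step. -/
theorem inv_norm_mul_inner_mul_inner_nonneg {H : E →L[ℝ] E} {e x g : E} {lam ε : ℝ}
    (he : ‖e‖ = 1) (hHx : ⟪e, H x⟫ = lam * ⟪e, x⟫) (herr : ‖g - H x‖ ≤ ε)
    (hfar : ε ≤ lam * |⟪e, x⟫|) : 0 ≤ ‖g‖⁻¹ * ⟪e, g⟫ * ⟪e, x⟫ := by
  have hδ : |⟪e, g - H x⟫| ≤ ε :=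
    (abs_real_inner_le_norm e _).trans (by rwa [he, one_mul])
  have hsplit : ⟪e, g⟫ * ⟪e, x⟫ = lam * |⟪e, x⟫| ^ 2 + ⟪e, g - H x⟫ * ⟪e, x⟫ := by
    rw [sq_abs, inner_sub_right, hHx]
    ring
  have hlower : -(ε * |⟪e, x⟫|) ≤ ⟪e, g - H x⟫ * ⟪e, x⟫ := by
    refine le_trans ?_ (neg_abs_le _)
    rw [neg_le_neg_iff, abs_mul]
    exact mul_le_mul_of_nonneg_right hδ (abs_nonneg _)
  rw [mul_assoc]
  refine mul_nonneg (inv_nonneg.mpr (norm_nonneg g)) ?_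
  nlinarith [abs_nonneg ⟪e, x⟫]

end ProjectedStep

section ScalarStep

variable {η u : ℝ}

theorem abs_sub_mul_le_abs_add (hη : 0 ≤ η) (hu : |u| ≤ 1) (a : ℝ) : |a - η * u| ≤ |a| + η :=
  calc |a - η * u| ≤ |a| + |η * u| := abs_sub _ _
    _ ≤ |a| + η := by
      rw [abs_mul, abs_of_nonneg hη]
      exact add_le_add_right (mul_le_of_le_one_right hη hu) _

theorem sq_sub_mul_le_sq_add {a : ℝ} (hη : 0 ≤ η) (hu : |u| ≤ 1) (hua : 0 ≤ u * a) :
    (a - η * u) ^ 2 ≤ a ^ 2 + η ^ 2 := by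
  have hu2 : u ^ 2 ≤ 1 := (sq_le_one_iff_abs_le_one u).mpr hu
  nlinarith [mul_nonneg hη hua, mul_le_of_le_one_right (sq_nonneg η) hu2]

end ScalarStep

section ProjectedDynamics

variable {α u : ℕ → ℝ} {η a : ℝ} {T : ℕ}

theorem abs_le_abs_zero_add_mul (hη : 0 ≤ η) (hstep : ∀ s < T, α (s + 1) = α s - η * u s)
    (hu : ∀ s < T, |u s| ≤ 1) : ∀ s ≤ T, |α s| ≤ |α 0| + s * η := by
  intro s hs
  induction s with
  | zero => simp
  | succ n ih =>
    rw [hstep n hs]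
    have := abs_sub_mul_le_abs_add hη (hu n hs) (α n)
    push_cast
    linarith [ih (by omega)]

theorem sq_le_max_add_mul (hη : 0 ≤ η) (hstep : ∀ s < T, α (s + 1) = α s - η * u s)
    (hu : ∀ s < T, |u s| ≤ 1) (hsign : ∀ s < T, a ≤ |α s| → 0 ≤ u s * α s) :
    ∀ s ≤ T, α s ^ 2 ≤ max (α 0 ^ 2) ((a + η) ^ 2) + s * η ^ 2 := by
  intro s hs
  induction s with
  | zero => simp
  | succ n ih =>
    have ih := ih (by omega)
    rw [hstep n hs]
    push_cast
    by_cases hfar : a ≤ |α n|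
    · linarith [sq_sub_mul_le_sq_add hη (hu n hs) (hsign n hs hfar)]
    · have hnear : |α n - η * u n| ≤ a + η := by
        linarith [abs_sub_mul_le_abs_add hη (hu n hs) (α n)]
      have : (α n - η * u n) ^ 2 ≤ (a + η) ^ 2 := by
        rw [← sq_abs]
        exact pow_le_pow_left₀ (abs_nonneg _) hnear 2
      nlinarith [le_max_right (α 0 ^ 2) ((a + η) ^ 2), n.cast_nonneg (α := ℝ), sq_nonneg η]

end ProjectedDynamics

section Bound

variable {s τ lam β ρ a y₀ y : ℝ}

theorem mul_sq_sub_sq_le_of_small (hs : 0 < s) (hs1 : s ≤ 1) (hτ : 0 ≤ τ) (hτs : τ ≤ s)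
    (hlam : 0 < lam) (hlams : lam ≤ s) (hlama : lam * a ≤ ρ / 2 * s ^ 2) (hnear : |y₀| < a + s ^ 2)
    (hcrude : |y| ≤ |y₀| + τ) : lam * (y ^ 2 - y₀ ^ 2) ≤ (ρ + 3) * s ^ 3 := by
  have hy : y ^ 2 ≤ (|y₀| + τ) ^ 2 := by
    rw [← sq_abs]
    exact pow_le_pow_left₀ (abs_nonneg y) hcrude 2
  have hlamy₀ : lam * |y₀| ≤ ρ / 2 * s ^ 2 + s ^ 3 := by
    nlinarith [mul_le_mul_of_nonneg_left hnear.le hlam.le]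
  calc lam * (y ^ 2 - y₀ ^ 2) ≤ τ * (2 * (lam * |y₀|) + lam * τ) := by
        nlinarith [sq_abs y₀]
    _ ≤ s * (2 * (ρ / 2 * s ^ 2 + s ^ 3) + s * s) := by gcongr
    _ ≤ (ρ + 3) * s ^ 3 := by nlinarith [mul_le_mul_of_nonneg_left hs1 (pow_pos hs 3).le]

theorem mul_sq_sub_sq_le_of_large (hs : 0 < s) (hs1 : s ≤ 1) (hτ : 0 ≤ τ) (hτs : τ ≤ s)
    (hlam : 0 < lam) (hlamβ : lam ≤ β) (hslam : s < lam) (ha : 0 ≤ a)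
    (hlama : lam * a ≤ ρ / 2 * s ^ 2)
    (hy : y ^ 2 ≤ (a + s ^ 2) ^ 2 + τ * s ^ 2) :
    lam * (y ^ 2 - y₀ ^ 2) ≤ (ρ ^ 2 / 2 + 3 * β) * s ^ 3 := by
  have has : a ≤ ρ / 2 * s := by nlinarith
  have hband : lam * a ^ 2 ≤ ρ ^ 2 / 4 * s ^ 3 := by
    calc lam * a ^ 2 = (lam * a) * a := by ring
      _ ≤ ρ / 2 * s ^ 2 * (ρ / 2 * s) := by
        gcongr
        exact (mul_nonneg hlam.le ha).trans hlama
      _ = ρ ^ 2 / 4 * s ^ 3 := by ring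
  have hs4 : s ^ 4 ≤ s ^ 3 := pow_le_pow_of_le_one hs.le hs1 (by norm_num)
  calc lam * (y ^ 2 - y₀ ^ 2) ≤ lam * ((a + s ^ 2) ^ 2 + τ * s ^ 2) := by
        nlinarith [sq_nonneg y₀]
    _ ≤ 2 * (lam * a ^ 2) + 2 * lam * s ^ 4 + lam * τ * s ^ 2 := by
        nlinarith [sq_nonneg (a - s ^ 2)]
    _ ≤ 2 * (ρ ^ 2 / 4 * s ^ 3) + 2 * β * s ^ 3 + β * s * s ^ 2 := by
        gcongr <;> linarith
    _ = (ρ ^ 2 / 2 + 3 * β) * s ^ 3 := by ring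

theorem mul_sq_sub_sq_le (hs : 0 < s) (hs1 : s ≤ 1) (hτ : 0 ≤ τ) (hτs : τ ≤ s) (hlam : 0 < lam)
    (hlamβ : lam ≤ β) (ha : 0 ≤ a) (hlama : lam * a ≤ ρ / 2 * s ^ 2) (hcrude : |y| ≤ |y₀| + τ)
    (hy : y ^ 2 ≤ max (y₀ ^ 2) ((a + s ^ 2) ^ 2) + τ * s ^ 2) :
    lam * (y ^ 2 - y₀ ^ 2) ≤ (ρ ^ 2 + ρ + 3 * β + 3) * s ^ 3 := by
  have hρ : 0 ≤ ρ := by nlinarith [mul_nonneg hlam.le ha, pow_pos hs 2]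
  have hβ : 0 ≤ β := hlam.le.trans hlamβ
  have hs3 : 0 ≤ s ^ 3 := by positivity
  rcases le_or_gt (a + s ^ 2) |y₀| with hfar | hnear
  · have hband : (a + s ^ 2) ^ 2 ≤ y₀ ^ 2 := by
      rw [← sq_abs y₀]
      exact pow_le_pow_left₀ (by positivity) hfar 2
    rw [max_eq_left hband] at hy
    calc lam * (y ^ 2 - y₀ ^ 2) ≤ lam * (τ * s ^ 2) :=
          mul_le_mul_of_nonneg_left (by linarith) hlam.le
      _ ≤ β * (s * s ^ 2) := by gcongr
      _ ≤ (ρ ^ 2 + ρ + 3 * β + 3) * s ^ 3 := by nlinarith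
  rcases le_or_gt lam s with hsmall | hlarge
  · refine (mul_sq_sub_sq_le_of_small hs hs1 hτ hτs hlam hsmall hlama hnear hcrude).trans ?_
    nlinarith
  · have hband : y₀ ^ 2 ≤ (a + s ^ 2) ^ 2 := by
      rw [← sq_abs y₀]
      exact pow_le_pow_left₀ (abs_nonneg y₀) hnear.le 2
    rw [max_eq_right hband] at hy
    refine (mul_sq_sub_sq_le_of_large hs hs1 hτ hτs hlam hlamβ hlarge ha hlama hy).trans ?_
    nlinarith

end Bound

/-- Corollary 9 (positive eigendirections, value form): there is a constant `C = C(β, ρ)`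
such that, in the normalized-update dynamics with `0 < η ≤ 1`, `2 ≤ T ≤ η^{-1/2}` and all
eigenvalues of `H` in `[−β, β]` (i.e. `‖H‖ ≤ β` for symmetric `H`), for a unit eigenvector
`e` with eigenvalue `λ > 0` and `λ|α₀| ≤ β√η`, one has `λ(α_t² − α₀²) ≤ C·η^{3/2}`. -/
theorem stmt_14 (β ρ : ℝ) (hβ : 0 < β) (hρ : 0 < ρ) :
    ∃ C : ℝ, 0 < C ∧
      ∀ (d : ℕ) (H : Euc d →L[ℝ] Euc d),
        (∀ v w : Euc d, ⟪H v, w⟫ = ⟪v, H w⟫) →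
        ‖H‖ ≤ β →
        ∀ η : ℝ, 0 < η → η ≤ 1 →
        ∀ T : ℕ, 2 ≤ T → (T : ℝ) ≤ 1 / Real.sqrt η →
        ∀ x g : ℕ → Euc d,
          (∀ t ≤ T, g t ≠ 0) →
          (∀ t < T, x (t + 1) = x t - (η * ‖g t‖⁻¹) • g t) →
          (∀ t ≤ T, ‖g t - H (x t)‖ ≤ ρ / 2 * η ^ 2 * (T : ℝ) ^ 2) →
        ∀ (e : Euc d) (lam : ℝ), ‖e‖ = 1 → H e = lam • e → 0 < lam →
          lam * |⟪e, x 0⟫| ≤ β * Real.sqrt η →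
        ∀ t ≤ T,
          lam * (⟪e, x t⟫ ^ 2 - ⟪e, x 0⟫ ^ 2) ≤ C * (η * Real.sqrt η) := by
  refine ⟨ρ ^ 2 + ρ + 3 * β + 3, by positivity, ?_⟩
  intro d H hH hHβ η hη hη1 T _ hTη x g _ hx herr e lam he hHe hlam _ t ht
  set ε := ρ / 2 * η ^ 2 * (T : ℝ) ^ 2
  have hs : 0 < √η := Real.sqrt_pos.mpr hη
  have hsq : √η ^ 2 = η := Real.sq_sqrt hη.le
  have hTs : T * √η ≤ 1 := (le_div_iff₀ hs).mp hTη
  have hτs : t * η ≤ √η := by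
    have : (t : ℝ) ≤ T := by exact_mod_cast ht
    nlinarith
  have hlama : lam * (ε / lam) ≤ ρ / 2 * √η ^ 2 := by
    rw [mul_div_cancel₀ _ hlam.ne', hsq]
    have : η * T ^ 2 ≤ 1 := by
      rw [← hsq, ← mul_pow, mul_comm]
      exact pow_le_one₀ (by positivity) hTs
    calc ε = ρ / 2 * η * (η * T ^ 2) := by ring
      _ ≤ ρ / 2 * η := mul_le_of_le_one_right (by positivity) this
  have hlamβ : lam ≤ β :=
    (le_abs_self lam).trans ((abs_le_opNorm_of_apply_eq_smul he hHe).trans hHβ)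
  have hstep : ∀ s < T, ⟪e, x (s + 1)⟫ = ⟪e, x s⟫ - η * (‖g s‖⁻¹ * ⟪e, g s⟫) := fun s hs => by
    rw [hx s hs, inner_sub_normalized_smul]
  have hu : ∀ s < T, |‖g s‖⁻¹ * ⟪e, g s⟫| ≤ 1 :=
    fun s _ => abs_inv_norm_mul_inner_le_one he (g s)
  have hsign : ∀ s < T, ε / lam ≤ |⟪e, x s⟫| → 0 ≤ ‖g s‖⁻¹ * ⟪e, g s⟫ * ⟪e, x s⟫ :=
    fun s hs hfar => inv_norm_mul_inner_mul_inner_nonneg he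
      (inner_apply_eq_of_apply_eq_smul hH hHe _) (herr s hs.le)
      (by rwa [div_le_iff₀' hlam] at hfar)
  have hy : ⟪e, x t⟫ ^ 2 ≤ max (⟪e, x 0⟫ ^ 2) ((ε / lam + √η ^ 2) ^ 2) + t * η * √η ^ 2 := by
    rw [hsq]
    linarith [sq_le_max_add_mul hη.le hstep hu hsign t ht]
  have hcrude : |⟪e, x t⟫| ≤ |⟪e, x 0⟫| + t * η :=
    abs_le_abs_zero_add_mul (α := fun s ↦ ⟪e, x s⟫) hη.le hstep hu t ht
  have hbound := mul_sq_sub_sq_le hs (Real.sqrt_le_one.mpr hη1) (by positivity) hτs hlam hlamβ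
    (by positivity) hlama hcrude hy
  rwa [show √η ^ 3 = η * √η by rw [pow_succ, hsq]] at hbound
end
end

section
/- Consider the normalized-update dynamics with approximation error (ρ/2)·η²·T², and let e be a unit eigenvector of H with eigenvalue λ ≤ 0; write α_t = ⟨e, x_t⟩. Then for every t with 0 ≤ t ≤ T: |λ|·((α_t)² − (α₀)²) ≥ −ρ·(ηT)³. -/
open MeasureTheory ProbabilityTheory
open scoped RealInnerProductSpace

noncomputable section

/-!
Along the eigendirection `e` the coordinate `a = ⟪e, x⟫` moves by `-s c` with `c = ⟪e, g⟫`,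
`s = η / ‖g‖`, and `c ≈ λ a` up to the approximation error `ε`. Hence the step
`L((a - s c)² - a²)`, with `L = |λ|`, equals `L s² c² + 2 s c² - 2 s c (c - λ a)`, and only
the last term can be negative; it is at least `-2 s |c| ε ≥ -2 η ε`. Summing over at most `T`
steps gives `-2 η T ε = -ρ (η T)³`.
-/

lemma neg_two_mul_le_mul_sq_sub_sq {L a c s η ε : ℝ} (hL : 0 ≤ L) (hs : 0 ≤ s)
    (hsc : s * |c| ≤ η) (hε : |c + L * a| ≤ ε) :
    -(2 * η * ε) ≤ L * ((a - s * c) ^ 2 - a ^ 2) := by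
  have hcross : s * c * (c + L * a) ≤ η * ε :=
    calc s * c * (c + L * a) ≤ s * |c| * |c + L * a| := by
          rw [mul_assoc, mul_assoc, ← abs_mul]
          exact mul_le_mul_of_nonneg_left (le_abs_self _) hs
      _ ≤ η * ε := mul_le_mul hsc hε (abs_nonneg _) ((mul_nonneg hs (abs_nonneg _)).trans hsc)
  have hsq : 0 ≤ L * (s * c) ^ 2 + 2 * s * c ^ 2 := by positivity
  linarith [show L * ((a - s * c) ^ 2 - a ^ 2)
      = L * (s * c) ^ 2 + 2 * s * c ^ 2 - 2 * (s * c * (c + L * a)) by ring]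

section EigenStep

variable {F : Type*} [NormedAddCommGroup F] [InnerProductSpace ℝ F]

lemma inner_apply_of_eigenvector {H : F →L[ℝ] F} (hH : (H : F →ₗ[ℝ] F).IsSymmetric)
    {e : F} {lam : ℝ} (heig : H e = lam • e) (x : F) : ⟪e, H x⟫ = lam * ⟪e, x⟫ := by
  calc ⟪e, H x⟫ = ⟪H e, x⟫ := (hH e x).symm
    _ = lam * ⟪e, x⟫ := by rw [heig, real_inner_smul_left]

lemma neg_two_mul_le_sq_inner_normalized_step {H : F →L[ℝ] F}
    (hH : (H : F →ₗ[ℝ] F).IsSymmetric) {e : F} (he : ‖e‖ = 1) {lam : ℝ}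
    (heig : H e = lam • e) (hlam : lam ≤ 0) {η ε : ℝ} (hη : 0 ≤ η) {x g : F}
    (hg : ‖g - H x‖ ≤ ε) :
    -(2 * η * ε) ≤ |lam| * (⟪e, x - (η * ‖g‖⁻¹) • g⟫ ^ 2 - ⟪e, x⟫ ^ 2) := by
  have hc : |⟪e, g⟫| ≤ ‖g‖ := by simpa [he] using abs_real_inner_le_norm e g
  have hsc : η * ‖g‖⁻¹ * |⟪e, g⟫| ≤ η := by
    rcases (norm_nonneg g).eq_or_lt with h0 | hpos
    · simp [← h0, hη]
    · rw [mul_assoc]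
      exact mul_le_of_le_one_right hη (inv_mul_le_one_of_le₀ hc hpos.le)
  have hε : |⟪e, g⟫ + |lam| * ⟪e, x⟫| ≤ ε := by
    have := (abs_real_inner_le_norm e (g - H x)).trans
      (by rwa [he, one_mul] : ‖e‖ * ‖g - H x‖ ≤ ε)
    rwa [inner_sub_right, inner_apply_of_eigenvector hH heig, sub_eq_add_neg, ← neg_mul,
      ← abs_of_nonpos hlam] at this
  have := neg_two_mul_le_mul_sq_sub_sq (abs_nonneg lam) (by positivity) hsc hε
  rwa [inner_sub_right, real_inner_smul_right]

end EigenStep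

lemma neg_mul_le_sub_of_forall_le_succ_sub {u : ℕ → ℝ} {δ : ℝ} {t : ℕ}
    (h : ∀ s < t, -δ ≤ u (s + 1) - u s) : -(t * δ) ≤ u t - u 0 := by
  rw [← Finset.sum_range_sub]
  have := Finset.card_nsmul_le_sum (Finset.range t) _ (-δ)
    fun s hs => h s (Finset.mem_range.1 hs)
  simpa using this

theorem stmt_15_general (d : ℕ) (H : Euc d →L[ℝ] Euc d)
    (hsym : ∀ v w : Euc d, ⟪H v, w⟫ = ⟪v, H w⟫)
    (η ρ : ℝ) (hη : 0 < η) (T : ℕ)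
    (x g : ℕ → Euc d)
    (hrec : ∀ t < T, x (t + 1) = x t - (η * ‖g t‖⁻¹) • g t)
    (happ : ∀ t ≤ T, ‖g t - H (x t)‖ ≤ ρ / 2 * η ^ 2 * (T : ℝ) ^ 2)
    (e : Euc d) (he : ‖e‖ = 1) (lam : ℝ) (heig : H e = lam • e) (hlam : lam ≤ 0) :
    ∀ t ≤ T,
      -(ρ * (η * (T : ℝ)) ^ 3) ≤ |lam| * (⟪e, x t⟫ ^ 2 - ⟪e, x 0⟫ ^ 2) := by
  intro t ht
  set ε := ρ / 2 * η ^ 2 * (T : ℝ) ^ 2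
  have hε : 0 ≤ ε := (norm_nonneg _).trans (happ 0 (Nat.zero_le T))
  have hstep : ∀ s < t, -(2 * η * ε) ≤
      |lam| * ⟪e, x (s + 1)⟫ ^ 2 - |lam| * ⟪e, x s⟫ ^ 2 := fun s hs => by
    rw [← mul_sub, hrec s (hs.trans_le ht)]
    exact neg_two_mul_le_sq_inner_normalized_step hsym he heig hlam hη.le
      (happ s (hs.le.trans ht))
  have hsum :=
    neg_mul_le_sub_of_forall_le_succ_sub (u := fun s => |lam| * ⟪e, x s⟫ ^ 2) hstep
  have htT : (t : ℝ) * (2 * η * ε) ≤ T * (2 * η * ε) := by gcongr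
  have hcube : (T : ℝ) * (2 * η * ε) = ρ * (η * T) ^ 3 := by ring
  linarith

/-- Corollary 10 (negative eigendirections, value form): in the normalized-update dynamics
with approximation error `(ρ/2)η²T²`, along a unit eigenvector `e` with eigenvalue
`λ ≤ 0`, one has `|λ|(α_t² − α₀²) ≥ −ρ(ηT)³`. -/
theorem stmt_15 (d : ℕ) (H : Euc d →L[ℝ] Euc d)
    (hsym : ∀ v w : Euc d, ⟪H v, w⟫ = ⟪v, H w⟫)
    (η ρ : ℝ) (hη : 0 < η) (hρ : 0 < ρ) (T : ℕ)
    (x g : ℕ → Euc d)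
    (hgne : ∀ t ≤ T, g t ≠ 0)
    (hrec : ∀ t < T, x (t + 1) = x t - (η * ‖g t‖⁻¹) • g t)
    (happ : ∀ t ≤ T, ‖g t - H (x t)‖ ≤ ρ / 2 * η ^ 2 * (T : ℝ) ^ 2)
    (e : Euc d) (he : ‖e‖ = 1) (lam : ℝ) (heig : H e = lam • e) (hlam : lam ≤ 0) :
    ∀ t ≤ T,
      -(ρ * (η * (T : ℝ)) ^ 3) ≤ |lam| * (⟪e, x t⟫ ^ 2 - ⟪e, x 0⟫ ^ 2) :=
  stmt_15_general d H hsym η ρ hη T x g hrec happ e he lam heig hlam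
end
end

section
/- Let β, γ, ρ, η > 0 and N₀ ∈ ℕ with N₀ ≥ 1. Let (g_t)_{t=1}^{N₀} be vectors in ℝ^d, let e be a unit vector, write a_t = ⟨e, g_t⟩, and suppose: (i) a_{t+1} = a_t·(1 + γη/‖g_t‖) + b_t for all 1 ≤ t < N₀, where (b_t) are real numbers with |b_t| ≤ ρ·η²·t; (ii) ‖g_t‖ ≤ 2β·√η for all 1 ≤ t < N₀; (iii) a₁ ≠ 0 and ρ·η²·N₀/|a₁| ≤ γ·√η/(4β). Then for every t with 1 ≤ t ≤ N₀: |a_t| ≥ |a₁|·(1 + γ·√η/(4β))^{t−1}. -/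
open MeasureTheory ProbabilityTheory
open scoped RealInnerProductSpace

noncomputable section

theorem abs_mul_le_abs_mul_one_add_add {x b c s : ℝ} (hs : 0 ≤ s) (hc : x ≠ 0 → 2 * s ≤ c)
    (hb : |b| ≤ |x| * s) : |x| * (1 + s) ≤ |x * (1 + c) + b| := by
  rcases eq_or_ne x 0 with rfl | hx
  · simp
  have hc := hc hx
  calc |x| * (1 + s) = |x| * (1 + 2 * s) - |x| * s := by ring
    _ ≤ |x * (1 + c)| - |b| := by
      rw [abs_mul, abs_of_nonneg (by linarith : 0 ≤ 1 + c)]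
      gcongr
    _ ≤ |x * (1 + c) + b| := by simpa using abs_sub_abs_le_abs_sub (x * (1 + c)) (-b)

theorem abs_mul_pow_le_abs_of_perturbed_growth {a b c : ℕ → ℝ} {s : ℝ} {m n : ℕ} (hs : 0 ≤ s)
    (hrec : ∀ t, m ≤ t → t < n → a (t + 1) = a t * (1 + c t) + b t)
    (hc : ∀ t, m ≤ t → t < n → a t ≠ 0 → 2 * s ≤ c t)
    (hb : ∀ t, m ≤ t → t < n → |b t| ≤ |a m| * s) :
    ∀ t, m ≤ t → t ≤ n → |a m| * (1 + s) ^ (t - m) ≤ |a t| := by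
  intro t hmt
  induction t, hmt using Nat.le_induction with
  | base => simp
  | succ t hmt ih =>
    intro htn
    have ih := ih (by omega)
    -- the growth so far lets the perturbation bound `|a m| * s` be traded for `|a t| * s`
    have ham : |a m| ≤ |a t| :=
      le_trans (le_mul_of_one_le_right (abs_nonneg _) (one_le_pow₀ (by linarith))) ih
    have hb' : |b t| ≤ |a t| * s := (hb t hmt htn).trans (by gcongr)
    calc |a m| * (1 + s) ^ (t + 1 - m) = |a m| * (1 + s) ^ (t - m) * (1 + s) := by
          rw [Nat.sub_add_comm hmt, pow_succ, mul_assoc]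
      _ ≤ |a t| * (1 + s) := by gcongr
      _ ≤ |a (t + 1)| := by
          rw [hrec t hmt htn]
          exact abs_mul_le_abs_mul_one_add_add hs (hc t hmt htn) hb'

theorem stmt_16_general (d : ℕ) (β γ ρ η : ℝ)
    (hβ : 0 < β) (hγ : 0 < γ) (hρ : 0 < ρ) (hη : 0 < η)
    (N₀ : ℕ)
    (g : ℕ → Euc d) (e : Euc d) (b : ℕ → ℝ)
    (hrec : ∀ t, 1 ≤ t → t < N₀ →
      ⟪e, g (t + 1)⟫ = ⟪e, g t⟫ * (1 + γ * η / ‖g t‖) + b t)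
    (hb : ∀ t, 1 ≤ t → t < N₀ → |b t| ≤ ρ * η ^ 2 * t)
    (hgb : ∀ t, 1 ≤ t → t < N₀ → ‖g t‖ ≤ 2 * β * Real.sqrt η)
    (ha1 : ⟪e, g 1⟫ ≠ 0)
    (hcond : ρ * η ^ 2 * N₀ / |⟪e, g 1⟫| ≤ γ * Real.sqrt η / (4 * β)) :
    ∀ t, 1 ≤ t → t ≤ N₀ →
      |⟪e, g 1⟫| * (1 + γ * Real.sqrt η / (4 * β)) ^ (t - 1) ≤ |⟪e, g t⟫| := by
  refine abs_mul_pow_le_abs_of_perturbed_growth (a := fun t ↦ ⟪e, g t⟫)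
    (c := fun t ↦ γ * η / ‖g t‖) (s := γ * Real.sqrt η / (4 * β)) (by positivity) hrec ?_ ?_
  · intro t h1 htN hne
    have hg : 0 < ‖g t‖ := norm_pos_iff.2 fun h ↦ hne (by simp [h])
    have hsq : Real.sqrt η * Real.sqrt η = η := Real.mul_self_sqrt hη.le
    rw [le_div_iff₀ hg]
    calc 2 * (γ * Real.sqrt η / (4 * β)) * ‖g t‖
        ≤ 2 * (γ * Real.sqrt η / (4 * β)) * (2 * β * Real.sqrt η) := by gcongr; exact hgb t h1 htN
      _ = γ * η := by field_simp; linear_combination 4 * hsq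
  · intro t h1 htN
    rw [div_le_iff₀ (abs_pos.2 ha1)] at hcond
    calc |b t| ≤ ρ * η ^ 2 * t := hb t h1 htN
      _ ≤ ρ * η ^ 2 * N₀ := by gcongr
      _ ≤ _ := by linarith

/-- Geometric blow-up of the gradient component along the most negative direction
(while all gradients stay small): `|a_t| ≥ |a₁|(1 + γ√η/(4β))^{t−1}`. -/
theorem stmt_16 (d : ℕ) (β γ ρ η : ℝ)
    (hβ : 0 < β) (hγ : 0 < γ) (hρ : 0 < ρ) (hη : 0 < η)
    (N₀ : ℕ) (hN₀ : 1 ≤ N₀)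
    (g : ℕ → Euc d) (e : Euc d) (he : ‖e‖ = 1) (b : ℕ → ℝ)
    (hrec : ∀ t, 1 ≤ t → t < N₀ →
      ⟪e, g (t + 1)⟫ = ⟪e, g t⟫ * (1 + γ * η / ‖g t‖) + b t)
    (hb : ∀ t, 1 ≤ t → t < N₀ → |b t| ≤ ρ * η ^ 2 * t)
    (hgb : ∀ t, 1 ≤ t → t < N₀ → ‖g t‖ ≤ 2 * β * Real.sqrt η)
    (ha1 : ⟪e, g 1⟫ ≠ 0)
    (hcond : ρ * η ^ 2 * N₀ / |⟪e, g 1⟫| ≤ γ * Real.sqrt η / (4 * β)) :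
    ∀ t, 1 ≤ t → t ≤ N₀ →
      |⟪e, g 1⟫| * (1 + γ * Real.sqrt η / (4 * β)) ^ (t - 1) ≤ |⟪e, g t⟫| :=
  stmt_16_general d β γ ρ η hβ hγ hρ hη N₀ g e b hrec hb hgb ha1 hcond
end
end

section
/- For every β > 0 and ρ > 0 there exists a constant C > 0, depending only on β and ρ, such that the following holds. Consider the normalized-update dynamics with approximation error (ρ/2)·η²·T², where 0 < η ≤ 1, 2 ≤ T ≤ η^{-1/2}, and all eigenvalues of H lie in [−β, β]. Define the quadratic objective f̃(x) = (1/2)·⟨x, Hx⟩, and suppose ‖H x₀‖² ≤ β²·η and ‖H x_T‖² ≥ 3β²·η. Then f̃(x_T) − f̃(x₀) ≤ −β·η + C·d·η^{3/2}. -/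
open MeasureTheory ProbabilityTheory
open scoped RealInnerProductSpace

noncomputable section

/-!
Each normalized step moves `x` by exactly `η` along a unit vector `u` with
`⟪H x, u⟫ ≥ ‖H x‖ - 2ε`, so `f̃` drops by at least `η (‖H x‖ - 2ε) - β η² / 2`, while `‖H x‖`
grows by at most `β η`. Hence `‖H x_t‖ ≥ a - (T - t) β η` with `a = ‖H x_T‖`, and summing the
decreases gives `f̃(x_T) - f̃(x_0) ≤ -(v a - β v² / 2) + O(η^{3/2})` with `v = η T ≤ √η`.
Since `‖H x‖` grew from at most `β √η` to `a ≥ √3 β √η`, the travelled distance `v` is large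
enough that `v a - β v² / 2 ≥ β η`.
-/

open Finset

lemma dist_le_of_dist_succ_le {α : Type*} [PseudoMetricSpace α] {x : ℕ → α} {T : ℕ} {η : ℝ}
    (hx : ∀ t < T, dist (x t) (x (t + 1)) ≤ η) {t : ℕ} (ht : t ≤ T) :
    dist (x t) (x T) ≤ ((T : ℝ) - t) * η := by
  have := dist_le_Ico_sum_of_dist_le (f := x) (d := fun _ => η) ht fun _ hk => hx _ hk
  rwa [sum_const, Nat.card_Ico, nsmul_eq_mul, Nat.cast_sub ht] at this

lemma sum_range_cast_sub (T : ℕ) : ∑ t ∈ range T, ((T : ℝ) - t) = T * (T + 1) / 2 := by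
  induction T with
  | zero => simp
  | succ T ih =>
    simp only [sum_range_succ, Nat.cast_succ, add_sub_right_comm _ (1 : ℝ), sum_add_distrib,
      sum_const, card_range, nsmul_eq_mul, ih]
    ring

section NormedSpace

variable {F : Type*} [NormedAddCommGroup F] [NormedSpace ℝ F]

lemma norm_inv_norm_smul_self {g : F} (hg : g ≠ 0) : ‖‖g‖⁻¹ • g‖ = 1 := by
  rw [norm_smul, norm_inv, norm_norm, inv_mul_cancel₀ (norm_ne_zero_iff.mpr hg)]

lemma norm_apply_le_of_normalized_steps {H : F →L[ℝ] F} {β η : ℝ} (hHβ : ‖H‖ ≤ β)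
    (hη : 0 ≤ η) {T : ℕ} {x g : ℕ → F} (hg : ∀ t < T, g t ≠ 0)
    (hstep : ∀ t < T, x (t + 1) = x t - (η * ‖g t‖⁻¹) • g t) {t : ℕ} (ht : t ≤ T) :
    ‖H (x T)‖ ≤ ‖H (x t)‖ + β * (((T : ℝ) - t) * η) := by
  have hunit : ∀ t < T, dist (x t) (x (t + 1)) ≤ η := fun t ht => by
    rw [hstep t ht, dist_eq_norm, sub_sub_cancel, mul_smul, norm_smul, norm_inv_norm_smul_self
      (hg t ht), mul_one, Real.norm_eq_abs, abs_of_nonneg hη]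
  have hdist : ‖x T - x t‖ ≤ ((T : ℝ) - t) * η := by
    rw [← dist_eq_norm, dist_comm]; exact dist_le_of_dist_succ_le hunit ht
  have hlip : ‖H (x T) - H (x t)‖ ≤ β * (((T : ℝ) - t) * η) := by
    rw [← map_sub]
    exact (H.le_opNorm _).trans (mul_le_mul hHβ hdist (norm_nonneg _) ((norm_nonneg _).trans hHβ))
  linarith [norm_le_insert' (H (x T)) (H (x t))]

end NormedSpace

section InnerProductSpace

variable {E : Type*} [NormedAddCommGroup E] [InnerProductSpace ℝ E]

def quadObjective (H : E →L[ℝ] E) (x : E) : ℝ := 1 / 2 * ⟪x, H x⟫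

lemma quadObjective_sub_smul {H : E →L[ℝ] E} (hH : (H : E →ₗ[ℝ] E).IsSymmetric)
    (x u : E) (c : ℝ) :
    quadObjective H (x - c • u) = quadObjective H x - c * ⟪H x, u⟫ + c ^ 2 / 2 * ⟪u, H u⟫ := by
  have hswap : ⟪x, H u⟫ = ⟪H x, u⟫ := (hH x u).symm
  simp only [quadObjective, map_sub, map_smul, inner_sub_left, inner_sub_right,
    real_inner_smul_left, real_inner_smul_right, hswap, real_inner_comm u (H x)]
  ring

lemma real_inner_apply_self_le_opNorm (H : E →L[ℝ] E) (u : E) :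
    ⟪u, H u⟫ ≤ ‖H‖ * ‖u‖ ^ 2 :=
  calc ⟪u, H u⟫ ≤ ‖u‖ * ‖H u‖ := real_inner_le_norm _ _
    _ ≤ ‖u‖ * (‖H‖ * ‖u‖) := by gcongr; exact H.le_opNorm u
    _ = ‖H‖ * ‖u‖ ^ 2 := by ring

lemma norm_sub_two_mul_le_inner_normalize {y g : E} {ε : ℝ} (hg : g ≠ 0)
    (h : ‖g - y‖ ≤ ε) : ‖y‖ - 2 * ε ≤ ⟪y, ‖g‖⁻¹ • g⟫ := by
  have hgu : ⟪g, ‖g‖⁻¹ • g⟫ = ‖g‖ := by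
    rw [real_inner_smul_right, real_inner_self_eq_norm_sq]
    field_simp [norm_ne_zero_iff.mpr hg]
  have herr : |⟪y - g, ‖g‖⁻¹ • g⟫| ≤ ε :=
    calc |⟪y - g, ‖g‖⁻¹ • g⟫| ≤ ‖y - g‖ * ‖‖g‖⁻¹ • g‖ := abs_real_inner_le_norm _ _
      _ = ‖g - y‖ := by rw [norm_inv_norm_smul_self hg, mul_one, norm_sub_rev]
      _ ≤ ε := h
  have hsplit : ⟪y, ‖g‖⁻¹ • g⟫ = ‖g‖ + ⟪y - g, ‖g‖⁻¹ • g⟫ := by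
    rw [inner_sub_left, hgu]; ring
  have hnorm : ‖y‖ ≤ ‖g‖ + ‖g - y‖ := norm_sub_rev y g ▸ norm_le_insert' y g
  linarith [(abs_le.mp herr).1]

lemma quadObjective_normalized_step_le {H : E →L[ℝ] E} (hH : (H : E →ₗ[ℝ] E).IsSymmetric)
    {β η ε : ℝ} (hHβ : ‖H‖ ≤ β) (hη : 0 ≤ η) {x g : E} (hg : g ≠ 0) (h : ‖g - H x‖ ≤ ε) :
    quadObjective H (x - (η * ‖g‖⁻¹) • g) - quadObjective H x
      ≤ η * (2 * ε - ‖H x‖) + β * η ^ 2 / 2 := by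
  have hdescent := norm_sub_two_mul_le_inner_normalize hg h
  have hcurv : ⟪‖g‖⁻¹ • g, H (‖g‖⁻¹ • g)⟫ ≤ β := by
    have := real_inner_apply_self_le_opNorm H (‖g‖⁻¹ • g)
    rw [norm_inv_norm_smul_self hg, one_pow, mul_one] at this
    exact this.trans hHβ
  rw [mul_smul, quadObjective_sub_smul hH]
  nlinarith [mul_le_mul_of_nonneg_left hdescent hη, mul_le_mul_of_nonneg_left hcurv (sq_nonneg η)]

lemma quadObjective_sub_le_of_normalized_steps {H : E →L[ℝ] E}
    (hH : (H : E →ₗ[ℝ] E).IsSymmetric) {β η ε : ℝ} (hHβ : ‖H‖ ≤ β) (hη : 0 ≤ η)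
    {T : ℕ} {x g : ℕ → E} (hg : ∀ t < T, g t ≠ 0)
    (hstep : ∀ t < T, x (t + 1) = x t - (η * ‖g t‖⁻¹) • g t)
    (happ : ∀ t < T, ‖g t - H (x t)‖ ≤ ε) :
    quadObjective H (x T) - quadObjective H (x 0)
      ≤ T * η * (2 * ε + β * η - ‖H (x T)‖) + β * η ^ 2 * T ^ 2 / 2 :=
  calc quadObjective H (x T) - quadObjective H (x 0)
      = ∑ t ∈ range T, (quadObjective H (x (t + 1)) - quadObjective H (x t)) :=
        (sum_range_sub (fun t => quadObjective H (x t)) T).symm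
    _ ≤ ∑ t ∈ range T, (η * (2 * ε - ‖H (x T)‖) + β * η ^ 2 / 2
          + β * η ^ 2 * ((T : ℝ) - t)) := by
        refine sum_le_sum fun t ht => ?_
        have ht := mem_range.mp ht
        have hgrad := norm_apply_le_of_normalized_steps hHβ hη hg hstep ht.le
        rw [hstep t ht]
        nlinarith [quadObjective_normalized_step_le hH hHβ hη (hg t ht) (happ t ht)]
    _ = T * η * (2 * ε + β * η - ‖H (x T)‖) + β * η ^ 2 * T ^ 2 / 2 := by
        rw [sum_add_distrib, sum_const, card_range, nsmul_eq_mul, ← mul_sum, sum_range_cast_sub]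
        ring

end InnerProductSpace

lemma mul_sq_le_mul_sub_mul_sq_div_two {β s v a : ℝ} (hβ : 0 < β) (hvs : v ≤ s)
    (ha0 : 0 ≤ a) (ha : 3 * β ^ 2 * s ^ 2 ≤ a ^ 2) (hav : a ≤ β * s + β * v) :
    β * s ^ 2 ≤ v * a - β * v ^ 2 / 2 := by
  -- `v ↦ v a - β v² / 2` is concave and `v` lies in `[a / β - s, s]`; at both ends the claim
  -- follows from `a² ≥ 3 β² s²`.
  have hlow : 0 ≤ β * v - (a - β * s) := by linarith
  have hup : 0 ≤ a + β * s - β * v := by nlinarith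
  nlinarith [mul_nonneg hlow hup]

/-- Lemma 12 (value decrease near a saddle for the quadratic objective): there is a
constant `C = C(β, ρ)` such that, in the normalized-update dynamics with `0 < η ≤ 1`,
`2 ≤ T ≤ η^{-1/2}`, all eigenvalues of `H` in `[−β, β]` (i.e. `‖H‖ ≤ β` for symmetric
`H`), if `‖Hx₀‖² ≤ β²η` and `‖Hx_T‖² ≥ 3β²η`, then the quadratic objective
`f̃(x) = ½⟨x, Hx⟩` satisfies `f̃(x_T) − f̃(x₀) ≤ −βη + C·d·η^{3/2}`. -/
theorem stmt_18 (β ρ : ℝ) (hβ : 0 < β) (hρ : 0 < ρ) :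
    ∃ C : ℝ, 0 < C ∧
      ∀ (d : ℕ) (H : Euc d →L[ℝ] Euc d),
        (∀ v w : Euc d, ⟪H v, w⟫ = ⟪v, H w⟫) →
        ‖H‖ ≤ β →
        ∀ η : ℝ, 0 < η → η ≤ 1 →
        ∀ T : ℕ, 2 ≤ T → (T : ℝ) ≤ 1 / Real.sqrt η →
        ∀ x g : ℕ → Euc d,
          (∀ t ≤ T, g t ≠ 0) →
          (∀ t < T, x (t + 1) = x t - (η * ‖g t‖⁻¹) • g t) →
          (∀ t ≤ T, ‖g t - H (x t)‖ ≤ ρ / 2 * η ^ 2 * (T : ℝ) ^ 2) →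
          ‖H (x 0)‖ ^ 2 ≤ β ^ 2 * η →
          3 * β ^ 2 * η ≤ ‖H (x T)‖ ^ 2 →
          1 / 2 * ⟪x T, H (x T)⟫ - 1 / 2 * ⟪x 0, H (x 0)⟫ ≤
            -(β * η) + C * d * (η * Real.sqrt η) := by
  refine ⟨β + ρ, by positivity, ?_⟩
  intro d H hH hHβ η hη _ T _ hTs x g hg hstep happ h0 hT
  set s := Real.sqrt η
  have hs : 0 < s := Real.sqrt_pos.mpr hη
  have hs2 : s ^ 2 = η := Real.sq_sqrt hη.le
  have hd : (1 : ℝ) ≤ d := by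
    have hxT : x T ≠ 0 := fun h => by simp [h] at hT; nlinarith [mul_pos (mul_pos hβ hβ) hη]
    exact_mod_cast (finrank_euclideanSpace_fin (𝕜 := ℝ)) ▸
      Module.finrank_pos_iff_exists_ne_zero.mpr ⟨x T, hxT⟩
  have hg' : ∀ t < T, g t ≠ 0 := fun t ht => hg t ht.le
  have hgrowth := norm_apply_le_of_normalized_steps hHβ hη.le hg' hstep T.zero_le
  have h0' : ‖H (x 0)‖ ≤ β * s :=
    (pow_le_pow_iff_left₀ (norm_nonneg _) (by positivity) two_ne_zero).mp (by rwa [mul_pow, hs2])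
  have hvs : η * T ≤ s := by nlinarith [(le_div_iff₀ hs).mp hTs]
  have hkey := mul_sq_le_mul_sub_mul_sq_div_two hβ hvs (norm_nonneg _) (by rwa [hs2])
    (by push_cast at hgrowth; nlinarith)
  calc 1 / 2 * ⟪x T, H (x T)⟫ - 1 / 2 * ⟪x 0, H (x 0)⟫
      = quadObjective H (x T) - quadObjective H (x 0) := rfl
    _ ≤ T * η * (2 * (ρ / 2 * η ^ 2 * T ^ 2) + β * η - ‖H (x T)‖) + β * η ^ 2 * T ^ 2 / 2 :=
        quadObjective_sub_le_of_normalized_steps hH hHβ hη.le hg' hstep fun t ht => happ t ht.le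
    _ = ρ * (η * T) ^ 3 + β * η * (η * T)
          - ((η * T) * ‖H (x T)‖ - β * (η * T) ^ 2 / 2) := by ring
    _ ≤ ρ * s ^ 3 + β * η * s - β * s ^ 2 := by gcongr
    _ = -(β * η) + (β + ρ) * (η * s) := by rw [← hs2]; ring
    _ ≤ -(β * η) + (β + ρ) * d * (η * s) := by
        gcongr
        exact le_mul_of_one_le_right (by positivity) hd
end
end
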